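/- arXiv:2110.05788 — 2 statements merged into one kernel-verified Lean document; each statement's English description precedes it below -/
import Mathlib

section
/- Every orthohedral set S ⊆ ℤ^N with rk(S) < N is pet-isomorphic to a finite disjoint union of stacks of orthants S' = ⋃_j S_j such that no maximal orthant of any S_j is parallel to a suborthant of S_k for k ≠ j. -/
open Pointwise

namespace PeiPaper

/-- Points of the face of the standard orthant spanned by the canonical basis vectors in `Y`. -/
def stdFace (N : ℕ) (Y : Finset (Fin N)) : Set (Fin N → ℤ) :=
  {v | (∀ i, 0 ≤ v i) ∧ ∀ i, i ∉ Y → v i = 0}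

/-- Integral orthogonal matrix. -/
def IsOrthMat {N : ℕ} (A : Matrix (Fin N) (Fin N) ℤ) : Prop :=
  A * A.transpose = 1

/-- `L` is an integral orthant of rank `k` in `ℤ^N`: an affine-orthogonal image of a
rank-`k` face of the standard orthant. -/
def IsOrthantOfRank {N : ℕ} (L : Set (Fin N → ℤ)) (k : ℕ) : Prop :=
  ∃ (a : Fin N → ℤ) (A : Matrix (Fin N) (Fin N) ℤ) (Y : Finset (Fin N)),
    IsOrthMat A ∧ Y.card = k ∧ L = (fun v => a + A.mulVec v) '' stdFace N Y

def IsOrthant {N : ℕ} (L : Set (Fin N → ℤ)) : Prop := ∃ k, IsOrthantOfRank L k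

/-- `S` is orthohedral: a finite union of integral orthants. -/
def IsOrthohedral {N : ℕ} (S : Set (Fin N → ℤ)) : Prop :=
  ∃ 𝓛 : Set (Set (Fin N → ℤ)), 𝓛.Finite ∧ (∀ L ∈ 𝓛, IsOrthant L) ∧ S = ⋃₀ 𝓛

/-- The rank of a set: the maximal rank of an orthant contained in it. -/
noncomputable def orthRank {N : ℕ} (S : Set (Fin N → ℤ)) : ℕ :=
  sSup {k | ∃ L, IsOrthantOfRank L k ∧ L ⊆ S}

/-- Commensurability: the intersection is nonempty and has the same rank as both sets. -/
def Commensurable {N : ℕ} (L L' : Set (Fin N → ℤ)) : Prop :=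
  (L ∩ L').Nonempty ∧ orthRank L = orthRank (L ∩ L') ∧ orthRank L' = orthRank (L ∩ L')

/-- The rank-`k` orthants contained in `S`. -/
def germSet {N : ℕ} (S : Set (Fin N → ℤ)) (k : ℕ) : Set (Set (Fin N → ℤ)) :=
  {L | IsOrthantOfRank L k ∧ L ⊆ S}

/-- The rank-`k` germs of `S`: commensurability classes of rank-`k` orthants of `S`. -/
def Germ {N : ℕ} (S : Set (Fin N → ℤ)) (k : ℕ) : Type _ :=
  Quot (fun L L' : germSet S k => Commensurable L.1 L'.1)

def germOf {N : ℕ} (S : Set (Fin N → ℤ)) (k : ℕ) (L : germSet S k) : Germ S k :=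
  Quot.mk _ L

/-- The number of rank-`k` germs of `S` (as a natural number; `0` if infinite). -/
noncomputable def heightAt {N : ℕ} (S : Set (Fin N → ℤ)) (k : ℕ) : ℕ :=
  Nat.card (Germ S k)

/-- The height of an orthohedral set: the number of germs of maximal rank. -/
noncomputable def height {N : ℕ} (S : Set (Fin N → ℤ)) : ℕ :=
  heightAt S (orthRank S)

/-- `f` is (the restriction of) an isometry of `ℤ^N` on `L`. -/
def IsometricOn {N : ℕ} (f : (Fin N → ℤ) → (Fin N → ℤ)) (L : Set (Fin N → ℤ)) : Prop :=
  ∃ (a : Fin N → ℤ) (A : Matrix (Fin N) (Fin N) ℤ),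
    IsOrthMat A ∧ ∀ x ∈ L, f x = a + A.mulVec x

/-- `f` is (the restriction of) a translation on `L`. -/
def TranslationOn {N : ℕ} (f : (Fin N → ℤ) → (Fin N → ℤ)) (L : Set (Fin N → ℤ)) : Prop :=
  ∃ a : Fin N → ℤ, ∀ x ∈ L, f x = a + x

/-- `f` is a piecewise-Euclidean-isometric map on `S`. -/
def IsPeiMapOn {N : ℕ} (S : Set (Fin N → ℤ)) (f : (Fin N → ℤ) → (Fin N → ℤ)) : Prop :=
  ∃ 𝓛 : Set (Set (Fin N → ℤ)), 𝓛.Finite ∧ (∀ L ∈ 𝓛, IsOrthant L) ∧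
    S = ⋃₀ 𝓛 ∧ 𝓛.PairwiseDisjoint id ∧ ∀ L ∈ 𝓛, IsometricOn f L

/-- `f` is a piecewise-Euclidean-translation map on `S`. -/
def IsPetMapOn {N : ℕ} (S : Set (Fin N → ℤ)) (f : (Fin N → ℤ) → (Fin N → ℤ)) : Prop :=
  ∃ 𝓛 : Set (Set (Fin N → ℤ)), 𝓛.Finite ∧ (∀ L ∈ 𝓛, IsOrthant L) ∧
    S = ⋃₀ 𝓛 ∧ 𝓛.PairwiseDisjoint id ∧ ∀ L ∈ 𝓛, TranslationOn f L

def IsPeiIso {N : ℕ} (S S' : Set (Fin N → ℤ)) (f : (Fin N → ℤ) → (Fin N → ℤ)) : Prop :=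
  IsPeiMapOn S f ∧ Set.InjOn f S ∧ f '' S = S'

def PeiIsomorphic {N : ℕ} (S S' : Set (Fin N → ℤ)) : Prop := ∃ f, IsPeiIso S S' f

def IsPetIso {N : ℕ} (S S' : Set (Fin N → ℤ)) (f : (Fin N → ℤ) → (Fin N → ℤ)) : Prop :=
  IsPetMapOn S f ∧ Set.InjOn f S ∧ f '' S = S'

def PetIsomorphic {N : ℕ} (S S' : Set (Fin N → ℤ)) : Prop := ∃ f, IsPetIso S S' f

/-- A pei-permutation of `S`: a permutation of `ℤ^N` supported on `S` which is pei on `S`. -/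
def IsPeiPerm {N : ℕ} (S : Set (Fin N → ℤ)) (g : Equiv.Perm (Fin N → ℤ)) : Prop :=
  IsPeiMapOn S ⇑g ∧ ∀ x ∉ S, g x = x

/-- The element `g` has rank at most `k`: it is supported on an orthohedral set of rank `≤ k`. -/
def rankLE {N : ℕ} (g : Equiv.Perm (Fin N → ℤ)) (k : ℕ) : Prop :=
  ∃ T : Set (Fin N → ℤ), IsOrthohedral T ∧ orthRank T ≤ k ∧ ∀ x ∉ T, g x = x

/-- `g` fixes every rank-`k` germ of `S`. -/
def FixesGerm {N : ℕ} (S : Set (Fin N → ℤ)) (k : ℕ) (g : Equiv.Perm (Fin N → ℤ)) : Prop :=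
  ∀ L, IsOrthantOfRank L k → L ⊆ S →
    ∃ L', IsOrthantOfRank L' k ∧ L' ⊆ L ∧ Commensurable L L' ∧
      IsometricOn (⇑g) L' ∧ Commensurable (⇑g '' L') L

/-- `g` fixes every rank-`k` germ of `S` and acts on its tangent coset by a translation. -/
def TranslatesGerm {N : ℕ} (S : Set (Fin N → ℤ)) (k : ℕ) (g : Equiv.Perm (Fin N → ℤ)) : Prop :=
  ∀ L, IsOrthantOfRank L k → L ⊆ S →
    ∃ L' a, IsOrthantOfRank L' k ∧ L' ⊆ L ∧ Commensurable L L' ∧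
      (∀ x ∈ L', g x = a + x) ∧ Commensurable (⇑g '' L') L

/-- `σ` is the map induced by `g` on the rank-`k` germs of `S`. -/
def InducesGermMap {N : ℕ} (S : Set (Fin N → ℤ)) (k : ℕ) (g : Equiv.Perm (Fin N → ℤ))
    (σ : Germ S k → Germ S k) : Prop :=
  ∀ L : germSet S k, ∃ (L'' : Set (Fin N → ℤ)) (M : germSet S k),
    IsOrthantOfRank L'' k ∧ L'' ⊆ L.1 ∧ Commensurable L.1 L'' ∧
    M.1 = ⇑g '' L'' ∧ σ (germOf S k L) = germOf S k M

/-- A finitary permutation which is even (has sign `1` on a finite invariant subset). -/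
def IsEvenFinitary {α : Type*} (σ : Equiv.Perm α) : Prop :=
  ∃ (F : Finset α) (σF : Equiv.Perm F),
    (∀ a ∉ F, σ a = a) ∧ (∀ a : F, σ (a : α) = (σF a : α)) ∧
    @Equiv.Perm.sign F (Classical.decEq _) inferInstance σF = 1

/-- `g` induces an even finitary permutation on the rank-`k` germs of `S`. -/
def IsEvenOnGerms {N : ℕ} (S : Set (Fin N → ℤ)) (k : ℕ) (g : Equiv.Perm (Fin N → ℤ)) : Prop :=
  ∃ σ : Equiv.Perm (Germ S k), InducesGermMap S k g ⇑σ ∧ IsEvenFinitary σ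

/-- Ordering of germs (of arbitrary ranks): `p ≤ q` if they have representatives `L ⊆ L'`. -/
def germLE {N : ℕ} (S : Set (Fin N → ℤ)) (p q : Σ k, Germ S k) : Prop :=
  ∃ (L : germSet S p.1) (L' : germSet S q.1),
    germOf S p.1 L = p.2 ∧ germOf S q.1 L' = q.2 ∧ L.1 ⊆ L'.1

/-- A maximal germ of `S`. -/
def IsMaxGerm {N : ℕ} (S : Set (Fin N → ℤ)) (p : Σ k, Germ S k) : Prop :=
  ∀ q, germLE S p q → germLE S q p

/-- A `0`-based orthant. -/
def IsBasedOrthant {N : ℕ} (L0 : Set (Fin N → ℤ)) : Prop :=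
  ∃ (A : Matrix (Fin N) (Fin N) ℤ) (Y : Finset (Fin N)),
    IsOrthMat A ∧ L0 = (fun v => A.mulVec v) '' stdFace N Y

/-- Two (oriented) parallel orthants. -/
def ParallelOrthants {N : ℕ} (L L' : Set (Fin N → ℤ)) : Prop :=
  ∃ a : Fin N → ℤ, L' = a +ᵥ L

/-- The indicator image `S_τ` of `S`: the union of the `0`-based parallel translates of
the orthants contained in `S`. -/
def indicatorImage {N : ℕ} (S : Set (Fin N → ℤ)) : Set (Fin N → ℤ) :=
  ⋃₀ {L0 | IsBasedOrthant L0 ∧ ∃ a : Fin N → ℤ, (a +ᵥ L0) ⊆ S}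

/-- The height function `h_S`: the number of maximal germs of `S` whose indicator is `L0`. -/
noncomputable def hFun {N : ℕ} (S : Set (Fin N → ℤ)) (L0 : Set (Fin N → ℤ)) : ℕ :=
  Nat.card {p : Σ k, Germ S k //
    IsMaxGerm S p ∧ ∃ L : germSet S p.1, germOf S p.1 L = p.2 ∧ ∃ a : Fin N → ℤ, L.1 = a +ᵥ L0}

/-- `S` is quasi-normal: the maximal based orthants of `S_τ` are exactly the support of `h_S`. -/
def QuasiNormal {N : ℕ} (S : Set (Fin N → ℤ)) : Prop :=
  ∀ L0 : Set (Fin N → ℤ),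
    (IsBasedOrthant L0 ∧ L0 ⊆ indicatorImage S ∧
      ∀ L1, IsBasedOrthant L1 → L1 ⊆ indicatorImage S → L0 ⊆ L1 → L1 ⊆ L0)
    ↔ (IsBasedOrthant L0 ∧ 0 < hFun S L0)

/-- The germ `q` of `S'` is the image of the germ `p` of `S` under the injective pei-map `f`. -/
def GermMapsTo {N : ℕ} (f : (Fin N → ℤ) → (Fin N → ℤ)) (S S' : Set (Fin N → ℤ))
    (p : Σ k, Germ S k) (q : Σ k, Germ S' k) : Prop :=
  p.1 = q.1 ∧ ∃ (L : germSet S p.1) (L'' : Set (Fin N → ℤ)) (M : germSet S' q.1),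
    germOf S p.1 L = p.2 ∧ IsOrthantOfRank L'' p.1 ∧ L'' ⊆ L.1 ∧ Commensurable L.1 L'' ∧
    M.1 = f '' L'' ∧ germOf S' q.1 M = q.2

/-- A stack of `h` parallel rank-`n` orthants. -/
def IsStack {N : ℕ} (S : Set (Fin N → ℤ)) (n h : ℕ) : Prop :=
  ∃ (L0 : Set (Fin N → ℤ)) (a : Fin h → (Fin N → ℤ)),
    IsOrthantOfRank L0 n ∧
    (Pairwise fun i j => Disjoint (a i +ᵥ L0) (a j +ᵥ L0)) ∧
    S = ⋃ i, a i +ᵥ L0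

/-- A coordinate half-space of `ℤ^N`. -/
def IsHalfSpace {N : ℕ} (H : Set (Fin N → ℤ)) : Prop :=
  ∃ (i : Fin N) (c : ℤ), H = {x | x i ≤ c} ∨ H = {x | c ≤ x i}

/-- The canonical embedding `ℤ^N → ℤ^{N+1}`. -/
def emb (N : ℕ) (x : Fin N → ℤ) : Fin (N + 1) → ℤ :=
  fun i => if h : (i : ℕ) < N then x ⟨i, h⟩ else 0

/-- The sum of all matrix entries of a finitely supported family of vectors. -/
noncomputable def totalSum (k : ℕ) (Γ : Type*) : (Γ →₀ (Fin k → ℤ)) →+ ℤ :=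
  Finsupp.liftAddHom (fun _ => ∑ i : Fin k, Pi.evalAddMonoidHom (fun _ => ℤ) i)

/-- The clique (flag) complex of a graph. -/
def cliqueComplex {V : Type*} (G : SimpleGraph V) : Set (Finset V) :=
  {s | s.Nonempty ∧ G.IsClique (s : Set V)}

/-- The geometric realization of a simplicial complex on vertex set `V`. -/
def realization {V : Type*} (K : Set (Finset V)) : Set (V → ℝ) :=
  {f | (∀ v, 0 ≤ f v) ∧ ∃ s ∈ K, Function.support f ⊆ ↑s ∧ ∑ v ∈ s, f v = 1}

/-- A wedge (bouquet) of `n`-spheres indexed by `ι`, with basepoint `b`. -/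
noncomputable def wedgeSpheres (ι : Type) (n : ℕ)
    (b : Metric.sphere (0 : EuclideanSpace ℝ (Fin (n + 1))) 1) : Type :=
  Quot (fun p q : Unit ⊕ (ι × Metric.sphere (0 : EuclideanSpace ℝ (Fin (n + 1))) 1) =>
    (Sum.elim (fun _ => True) (fun pr => pr.2 = b) p) ∧
    (Sum.elim (fun _ => True) (fun qr => qr.2 = b) q))

noncomputable instance (ι : Type) (n : ℕ) (b : Metric.sphere (0 : EuclideanSpace ℝ (Fin (n + 1))) 1) :
    TopologicalSpace (wedgeSpheres ι n b) :=
  letI : TopologicalSpace ι := ⊥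
  instTopologicalSpaceQuot

/-!
Every orthant of `ℤ^N` is a box, a product of points and rays, so cutting along the grid through
the corners partitions an orthohedral set into disjoint boxes. A box absorbs a disjoint box of
strictly smaller direction: split the big box into a codimension-one face and its translate one
step inward; if the small box is parallel to the face, move it onto the face and the big box onto
its inward translate, otherwise absorb it into the face by induction. Hence every box is absorbed
into a box of a maximal direction above it, and the boxes of each maximal direction form a stack;
translating each stack far out along its own rays makes the stacks disjoint. An orthant of
maximal rank in a stack has the stack's direction, since along each of its rays only boxes with
the same ray reach arbitrarily far; so a translate of it inside another stack would make two
distinct maximal directions comparable.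
-/

/-- Each coordinate of a box is a point (`none`), an upward ray (`some true`) or a
downward ray (`some false`). -/
def Dir (N : ℕ) : Type := Fin N → Option Bool

namespace Dir

variable {N : ℕ}

instance : PartialOrder (Dir N) where
  le δ ε := ∀ i, δ i = none ∨ δ i = ε i
  le_refl _ _ := Or.inr rfl
  le_trans δ ε η h h' i := by
    rcases h i with h | h
    · exact Or.inl h
    · rcases h' i with h' | h' <;> simp_all
  le_antisymm δ ε h h' := funext fun i => by
    rcases h i with h | h
    · rcases h' i with h' | h' <;> simp_all
    · exact h

instance : Finite (Dir N) := inferInstanceAs (Finite (Fin N → Option Bool))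

instance : DecidableEq (Dir N) := inferInstanceAs (DecidableEq (Fin N → Option Bool))

instance : Inhabited (Dir N) := ⟨fun _ => none⟩

lemma le_def {δ ε : Dir N} : δ ≤ ε ↔ ∀ i, δ i = none ∨ δ i = ε i := Iff.rfl

def rank (δ : Dir N) : ℕ := (Finset.univ.filter fun i => (δ i).isSome).card

lemma eq_of_le_of_rank_le {δ ε : Dir N} (h : δ ≤ ε) (hr : ε.rank ≤ δ.rank) : δ = ε := by
  have hsub : (Finset.univ.filter fun i => (δ i).isSome) ⊆
      Finset.univ.filter fun i => (ε i).isSome := by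
    intro i
    simp only [Finset.mem_filter, Finset.mem_univ, true_and]
    rcases h i with hi | hi <;> simp [hi]
  have heq := Finset.eq_of_subset_of_card_le hsub hr
  funext i
  refine (h i).elim (fun hi => ?_) id
  have : i ∉ Finset.univ.filter fun i => (ε i).isSome := by simp [← heq, hi]
  simp_all [Option.isSome_iff_ne_none]

def face (δ : Dir N) (i : Fin N) : Dir N := Function.update δ i none

@[simp] lemma face_self (δ : Dir N) (i : Fin N) : δ.face i i = none := Function.update_self ..

lemma face_of_ne (δ : Dir N) {i j : Fin N} (h : j ≠ i) : δ.face i j = δ j :=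
  Function.update_of_ne h ..

lemma face_lt {δ : Dir N} {i : Fin N} (hi : δ i ≠ none) : δ.face i < δ := by
  refine lt_of_le_of_ne (fun j => ?_) fun h => hi ?_
  · by_cases hj : j = i
    · subst hj; exact Or.inl (face_self δ j)
    · exact Or.inr (face_of_ne δ hj)
  · rw [← h]; exact face_self δ i

end Dir

def dirSign : Option Bool → ℤ
  | none => 0
  | some true => 1
  | some false => -1

def ival : Option Bool → ℤ → Set ℤ
  | none, c => {c}
  | some true, c => Set.Ici c
  | some false, c => Set.Iic c

@[simp] lemma mem_ival_none {x c : ℤ} : x ∈ ival none c ↔ x = c := Iff.rfl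
@[simp] lemma mem_ival_true {x c : ℤ} : x ∈ ival (some true) c ↔ c ≤ x := Iff.rfl
@[simp] lemma mem_ival_false {x c : ℤ} : x ∈ ival (some false) c ↔ x ≤ c := Iff.rfl

lemma self_mem_ival (d : Option Bool) (c : ℤ) : c ∈ ival d c := by
  rcases d with _ | _ | _ <;> simp

section Box

variable {N : ℕ}

def Box (δ : Dir N) (c : Fin N → ℤ) : Set (Fin N → ℤ) := {x | ∀ i, x i ∈ ival (δ i) (c i)}

lemma mem_box {δ : Dir N} {c x : Fin N → ℤ} : x ∈ Box δ c ↔ ∀ i, x i ∈ ival (δ i) (c i) :=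
  Iff.rfl

lemma vadd_box (t : Fin N → ℤ) (δ : Dir N) (c : Fin N → ℤ) : t +ᵥ Box δ c = Box δ (t + c) := by
  ext x
  simp only [Set.mem_vadd_set_iff_neg_vadd_mem, mem_box, vadd_eq_add, Pi.add_apply, Pi.neg_apply]
  refine forall_congr' fun i => ?_
  rcases δ i with _ | _ | _ <;> simp; omega

lemma box_subset_box_of_le {δ δ' : Dir N} (h : δ' ≤ δ) (c : Fin N → ℤ) : Box δ' c ⊆ Box δ c := by
  intro x hx i
  rcases h i with hi | hi
  · have hxi : x i = c i := by simpa [hi] using hx i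
    exact hxi ▸ self_mem_ival _ _
  · exact hi ▸ hx i

lemma disjoint_box_of_coord {δ δ' : Dir N} {c c' : Fin N → ℤ} (i : Fin N)
    (h : Disjoint (ival (δ i) (c i)) (ival (δ' i) (c' i))) : Disjoint (Box δ c) (Box δ' c') :=
  Set.disjoint_left.mpr fun _ hx hx' => Set.disjoint_left.mp h (hx i) (hx' i)

end Box

section Orthant

variable {N : ℕ}

lemma exists_eq_sign_of_sum_mul_self_eq_one {ι : Type*} [Fintype ι] {f : ι → ℤ}
    (h : ∑ j, f j * f j = 1) : ∃ j, (f j = 1 ∨ f j = -1) ∧ ∀ k, k ≠ j → f k = 0 := by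
  classical
  obtain ⟨j, hj⟩ : ∃ j, f j ≠ 0 := by
    by_contra! h0
    simp [h0] at h
  have hsplit := Finset.add_sum_erase Finset.univ (fun k => f k * f k) (Finset.mem_univ j)
  have hrest : 0 ≤ ∑ k ∈ Finset.univ.erase j, f k * f k :=
    Finset.sum_nonneg fun k _ => mul_self_nonneg (f k)
  have hj1 : 1 ≤ f j * f j := by nlinarith [Int.one_le_abs hj, abs_mul_abs_self (f j)]
  refine ⟨j, mul_self_eq_one_iff.mp (by omega), fun k hk => ?_⟩
  have hzero := (Finset.sum_eq_zero_iff_of_nonneg fun k _ => mul_self_nonneg (f k)).mp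
    (by omega) k (Finset.mem_erase.mpr ⟨hk, Finset.mem_univ k⟩)
  exact mul_self_eq_zero.mp hzero

lemma IsOrthMat.exists_signed_perm {A : Matrix (Fin N) (Fin N) ℤ} (hA : IsOrthMat A) :
    ∃ (σ : Equiv.Perm (Fin N)) (ε : Fin N → ℤ), (∀ i, ε i = 1 ∨ ε i = -1) ∧
      ∀ v i, A.mulVec v i = ε i * v (σ i) := by
  have hA' : ∀ i i', ∑ j, A i j * A i' j = if i = i' then 1 else 0 := fun i i' => by
    simpa [Matrix.mul_apply, Matrix.one_apply] using congrFun (congrFun hA i) i'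
  choose σ hσ hσ0 using fun i => exists_eq_sign_of_sum_mul_self_eq_one (by simpa using hA' i i)
  have hsum : ∀ (i : Fin N) (g : Fin N → ℤ), ∑ j, A i j * g j = A i (σ i) * g (σ i) :=
    fun i g => Finset.sum_eq_single _ (fun j _ hj => by rw [hσ0 i j hj, zero_mul]) (by simp)
  have hinj : Function.Injective σ := fun i i' hii' => by
    by_contra hne
    have h := hA' i i'
    rw [if_neg hne, hsum, hii'] at h
    rcases hσ i with h1 | h1 <;> rcases hσ i' with h2 | h2 <;> simp_all
  exact ⟨Equiv.ofBijective σ hinj.bijective_of_finite, fun i => A i (σ i), hσ, fun v i => hsum i v⟩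

lemma image_stdFace_signed_perm (a : Fin N → ℤ) (σ : Equiv.Perm (Fin N)) {ε : Fin N → ℤ}
    (hε : ∀ i, ε i = 1 ∨ ε i = -1) (Y : Finset (Fin N)) :
    (fun v => a + fun i => ε i * v (σ i)) '' stdFace N Y =
      Box (fun i => if σ i ∈ Y then some (decide (ε i = 1)) else none) a := by
  ext x
  constructor
  · rintro ⟨v, ⟨hv0, hvY⟩, rfl⟩ i
    by_cases hi : σ i ∈ Y
    · have := hv0 (σ i)
      rcases hε i with h | h <;> simp [hi, h] <;> omega
    · simp [hi, hvY _ hi]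
  · intro hx
    refine ⟨fun j => ε (σ.symm j) * (x (σ.symm j) - a (σ.symm j)), ⟨fun j => ?_, fun j hj => ?_⟩,
      funext fun i => ?_⟩
    · have := hx (σ.symm j)
      by_cases hj : j ∈ Y
      · rcases hε (σ.symm j) with h | h <;> simp_all
      · simp_all
    · have := hx (σ.symm j)
      simp_all
    · rcases hε i with h | h <;> simp [h]

lemma rank_signed_perm (σ : Equiv.Perm (Fin N)) (ε : Fin N → ℤ) (Y : Finset (Fin N)) :
    Dir.rank (fun i => if σ i ∈ Y then some (decide (ε i = 1)) else none) = Y.card :=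
  Finset.card_equiv σ fun i => by by_cases hi : σ i ∈ Y <;> simp [hi]

lemma isOrthantOfRank_box (δ : Dir N) (c : Fin N → ℤ) : IsOrthantOfRank (Box δ c) δ.rank := by
  set ε : Fin N → ℤ := fun i => if δ i = some false then -1 else 1
  have hε : ∀ i, ε i = 1 ∨ ε i = -1 := fun i => by
    by_cases h : δ i = some false <;> simp [ε, h]
  have hδ : (fun i => if (Equiv.refl (Fin N)) i ∈ Finset.univ.filter (fun i => (δ i).isSome)
      then some (decide (ε i = 1)) else none : Dir N) = δ := funext fun i => by
    rcases hi : δ i with _ | _ | _ <;> simp [ε, hi]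
  refine ⟨c, Matrix.diagonal ε, Finset.univ.filter fun i => (δ i).isSome, ?_, rfl, ?_⟩
  · rw [IsOrthMat, Matrix.diagonal_transpose, Matrix.diagonal_mul_diagonal, ← Matrix.diagonal_one]
    congr 1
    funext i
    rcases hε i with h | h <;> simp [h]
  · have himage := image_stdFace_signed_perm c (Equiv.refl _) hε
      (Finset.univ.filter fun i => (δ i).isSome)
    rw [hδ] at himage
    rw [← himage]
    congr 1
    funext v
    ext i
    simp [Matrix.mulVec_diagonal]

lemma IsOrthantOfRank.exists_eq_box {L : Set (Fin N → ℤ)} {k : ℕ} (hL : IsOrthantOfRank L k) :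
    ∃ (δ : Dir N) (c : Fin N → ℤ), L = Box δ c ∧ δ.rank = k := by
  obtain ⟨a, A, Y, hA, rfl, rfl⟩ := hL
  obtain ⟨σ, ε, hε, hAv⟩ := hA.exists_signed_perm
  refine ⟨_, a, ?_, rank_signed_perm σ ε Y⟩
  rw [← image_stdFace_signed_perm a σ hε]
  congr 1
  funext v
  rw [funext (hAv v)]

lemma IsOrthant.exists_eq_box {L : Set (Fin N → ℤ)} (hL : IsOrthant L) :
    ∃ (δ : Dir N) (c : Fin N → ℤ), L = Box δ c :=
  let ⟨_, hk⟩ := hL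
  let ⟨δ, c, h, _⟩ := hk.exists_eq_box
  ⟨δ, c, h⟩

end Orthant

section Partition

variable {N : ℕ}

def HasBoxPartition (S : Set (Fin N → ℤ)) : Prop :=
  ∃ P : Finset (Dir N × (Fin N → ℤ)),
    (P : Set (Dir N × (Fin N → ℤ))).PairwiseDisjoint (fun p => Box p.1 p.2) ∧
    S = ⋃ p ∈ P, Box p.1 p.2

/-- The fibres of `clampVec R` are the cells of the grid cutting every axis at the integers of
`[-R, R]`. -/
def clampVec (R : ℕ) (x : Fin N → ℤ) : Fin N → ℤ := fun i => max (-R - 1) (min (R + 1) (x i))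

lemma clampVec_clampVec {R R' : ℕ} (h : R ≤ R') (x : Fin N → ℤ) :
    clampVec R (clampVec R' x) = clampVec R x := by
  funext i
  simp only [clampVec]
  omega

def cellDir (R : ℕ) (z : Fin N → ℤ) : Dir N := fun i =>
  if z i = R + 1 then some true else if z i = -R - 1 then some false else none

lemma mem_box_cellDir {R : ℕ} {z x : Fin N → ℤ} (hz : ∀ i, |z i| ≤ R + 1) :
    x ∈ Box (cellDir R z) z ↔ clampVec R x = z := by
  rw [mem_box, funext_iff]
  refine forall_congr' fun i => ?_
  have := abs_le.mp (hz i)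
  simp only [cellDir, clampVec]
  split_ifs <;> simp <;> omega

def IsCellUnion (R : ℕ) (S : Set (Fin N → ℤ)) : Prop := clampVec R ⁻¹' S = S

lemma IsCellUnion.mem_iff {R : ℕ} {S : Set (Fin N → ℤ)} (h : IsCellUnion R S) (x : Fin N → ℤ) :
    clampVec R x ∈ S ↔ x ∈ S :=
  Set.ext_iff.mp h x

lemma IsCellUnion.mono {R R' : ℕ} {S : Set (Fin N → ℤ)} (h : IsCellUnion R S) (hR : R ≤ R') :
    IsCellUnion R' S := by
  ext x
  rw [Set.mem_preimage, ← h.mem_iff, clampVec_clampVec hR, h.mem_iff]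

lemma isCellUnion_box {R : ℕ} (δ : Dir N) {c : Fin N → ℤ} (hc : ∀ i, |c i| ≤ R) :
    IsCellUnion R (Box δ c) := by
  ext x
  simp only [Set.mem_preimage, mem_box, clampVec]
  refine forall_congr' fun i => ?_
  have := abs_le.mp (hc i)
  rcases δ i with _ | _ | _ <;> simp <;> omega

lemma exists_isCellUnion_box (δ : Dir N) (c : Fin N → ℤ) : ∃ R, IsCellUnion R (Box δ c) :=
  ⟨∑ i, (c i).natAbs, isCellUnion_box δ fun i => by
    rw [Int.abs_eq_natAbs, Nat.cast_le]
    exact Finset.single_le_sum (f := fun j => (c j).natAbs) (fun j _ => Nat.zero_le _)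
      (Finset.mem_univ i)⟩

lemma IsCellUnion.hasBoxPartition {R : ℕ} {S : Set (Fin N → ℤ)} (h : IsCellUnion R S) :
    HasBoxPartition S := by
  classical
  set Z := (Fintype.piFinset fun _ => Finset.Icc (-R - 1 : ℤ) (R + 1)).filter (· ∈ S)
  have hZ : ∀ z ∈ Z, ∀ i, |z i| ≤ R + 1 := fun z hz i => by
    have := Finset.mem_Icc.mp (Fintype.mem_piFinset.mp (Finset.mem_filter.mp hz).1 i)
    exact abs_le.mpr ⟨by omega, this.2⟩
  refine ⟨Z.image fun z => (cellDir R z, z), ?_, ?_⟩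
  · rw [Finset.coe_image, Set.InjOn.pairwiseDisjoint_image fun _ _ _ _ h => congrArg Prod.snd h]
    intro z hz z' hz' hne
    refine Set.disjoint_left.mpr fun x hx hx' => hne ?_
    rw [Function.comp_apply, mem_box_cellDir (hZ z hz)] at hx
    rw [Function.comp_apply, mem_box_cellDir (hZ z' hz')] at hx'
    rw [← hx, ← hx']
  · ext x
    rw [Finset.set_biUnion_finset_image, Set.mem_iUnion₂]
    constructor
    · intro hx
      have hmem : clampVec R x ∈ Z := by
        refine Finset.mem_filter.mpr ⟨Fintype.mem_piFinset.mpr fun i => ?_, (h.mem_iff x).mpr hx⟩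
        simp only [clampVec, Finset.mem_Icc]
        omega
      exact ⟨_, hmem, (mem_box_cellDir (hZ _ hmem)).mpr rfl⟩
    · rintro ⟨z, hz, hx⟩
      rw [mem_box_cellDir (hZ z hz)] at hx
      exact (h.mem_iff x).mp (hx ▸ (Finset.mem_filter.mp hz).2)

lemma hasBoxPartition_box_inter_box (δ δ' : Dir N) (c c' : Fin N → ℤ) :
    HasBoxPartition (Box δ c ∩ Box δ' c') := by
  obtain ⟨R, hR⟩ := exists_isCellUnion_box δ c
  obtain ⟨R', hR'⟩ := exists_isCellUnion_box δ' c'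
  have h : IsCellUnion (max R R') (Box δ c ∩ Box δ' c') := by
    rw [IsCellUnion, Set.preimage_inter, hR.mono (le_max_left R R'), hR'.mono (le_max_right R R')]
  exact h.hasBoxPartition

lemma IsOrthohedral.hasBoxPartition {S : Set (Fin N → ℤ)} (hS : IsOrthohedral S) :
    HasBoxPartition S := by
  obtain ⟨𝓛, hfin, horth, rfl⟩ := hS
  suffices ∃ R, IsCellUnion R (⋃₀ 𝓛) from this.elim fun _ h => h.hasBoxPartition
  induction 𝓛, hfin using Set.Finite.induction_on with
  | empty => exact ⟨0, by simp [IsCellUnion]⟩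
  | @insert L 𝓛 _ _ ih =>
    obtain ⟨R, hR⟩ := ih fun L' hL' => horth L' (Set.mem_insert_of_mem _ hL')
    obtain ⟨δ, c, rfl⟩ := (horth L (Set.mem_insert _ _)).exists_eq_box
    obtain ⟨R', hR'⟩ := exists_isCellUnion_box δ c
    refine ⟨max R' R, ?_⟩
    rw [Set.sUnion_insert, IsCellUnion, Set.preimage_union, hR'.mono (le_max_left R' R),
      hR.mono (le_max_right R' R)]

end Partition

section PetMap

variable {N : ℕ}

lemma hasBoxPartition_box (δ : Dir N) (c : Fin N → ℤ) : HasBoxPartition (Box δ c) :=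
  ⟨{(δ, c)}, by simp, by simp⟩

lemma HasBoxPartition.isPetMapOn {S : Set (Fin N → ℤ)} {f : (Fin N → ℤ) → Fin N → ℤ}
    (hS : HasBoxPartition S) (hf : TranslationOn f S) : IsPetMapOn S f := by
  obtain ⟨P, hP, rfl⟩ := hS
  obtain ⟨a, ha⟩ := hf
  refine ⟨(fun p : Dir N × (Fin N → ℤ) => Box p.1 p.2) '' P, P.finite_toSet.image _, ?_,
    by rw [Set.sUnion_image]; rfl, ?_, ?_⟩
  · rintro _ ⟨p, -, rfl⟩
    exact ⟨_, isOrthantOfRank_box _ _⟩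
  · rintro _ ⟨p, hp, rfl⟩ _ ⟨q, hq, rfl⟩ hne
    exact hP hp hq fun h => hne (h ▸ rfl)
  · rintro _ ⟨p, hp, rfl⟩
    exact ⟨a, fun x hx => ha x (Set.mem_biUnion hp hx)⟩

lemma IsPetMapOn.congr {S : Set (Fin N → ℤ)} {f g : (Fin N → ℤ) → Fin N → ℤ}
    (hf : IsPetMapOn S f) (h : Set.EqOn f g S) : IsPetMapOn S g := by
  obtain ⟨𝓛, hfin, horth, rfl, hdisj, htr⟩ := hf
  refine ⟨𝓛, hfin, horth, rfl, hdisj, fun L hL => ?_⟩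
  obtain ⟨a, ha⟩ := htr L hL
  exact ⟨a, fun x hx => (h (Set.mem_sUnion_of_mem hx hL)).symm.trans (ha x hx)⟩

lemma IsPetMapOn.iUnion {ι : Type*} [Finite ι] {S : ι → Set (Fin N → ℤ)}
    {f : (Fin N → ℤ) → Fin N → ℤ} (hS : Pairwise fun k k' => Disjoint (S k) (S k'))
    (h : ∀ k, IsPetMapOn (S k) f) :
    IsPetMapOn (⋃ k, S k) f := by
  choose 𝓛 hfin horth hcover hdisj htr using h
  refine ⟨⋃ k, 𝓛 k, Set.finite_iUnion hfin, ?_, ?_, ?_, ?_⟩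
  · simp only [Set.mem_iUnion]
    rintro L ⟨k, hL⟩
    exact horth k L hL
  · rw [Set.sUnion_iUnion]
    exact Set.iUnion_congr hcover
  · simp only [Set.PairwiseDisjoint, Set.Pairwise, Set.mem_iUnion]
    rintro L ⟨k, hL⟩ L' ⟨k', hL'⟩ hne
    by_cases hk : k = k'
    · subst hk
      exact hdisj k hL hL' hne
    · exact (hS hk).mono (hcover k ▸ Set.subset_sUnion_of_mem hL)
        (hcover k' ▸ Set.subset_sUnion_of_mem hL')
  · simp only [Set.mem_iUnion]
    rintro L ⟨k, hL⟩
    exact htr k L hL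

lemma IsPetMapOn.comp {S T : Set (Fin N → ℤ)} {f g : (Fin N → ℤ) → Fin N → ℤ}
    (hf : IsPetMapOn S f) (hg : IsPetMapOn T g) (hST : Set.MapsTo f S T) :
    IsPetMapOn S (g ∘ f) := by
  obtain ⟨𝓛, h𝓛fin, h𝓛orth, rfl, h𝓛disj, h𝓛tr⟩ := hf
  obtain ⟨𝓜, h𝓜fin, h𝓜orth, rfl, h𝓜disj, h𝓜tr⟩ := hg
  have := h𝓛fin.to_subtype
  have := h𝓜fin.to_subtype
  have hcover : ⋃₀ 𝓛 = ⋃ p : 𝓛 × 𝓜, (p.1 : Set (Fin N → ℤ)) ∩ f ⁻¹' p.2 := by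
    ext x
    simp only [Set.mem_sUnion, Set.mem_iUnion, Set.mem_inter_iff, Set.mem_preimage]
    constructor
    · rintro ⟨L, hL, hx⟩
      obtain ⟨M, hM, hfx⟩ := hST ⟨L, hL, hx⟩
      exact ⟨⟨⟨L, hL⟩, ⟨M, hM⟩⟩, hx, hfx⟩
    · rintro ⟨⟨⟨L, hL⟩, _⟩, hx, _⟩
      exact ⟨L, hL, hx⟩
  rw [hcover]
  refine IsPetMapOn.iUnion ?_ ?_
  · rintro ⟨⟨L, hL⟩, ⟨M, hM⟩⟩ ⟨⟨L', hL'⟩, ⟨M', hM'⟩⟩ hne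
    by_cases hLL : L = L'
    · subst hLL
      have hMM : M ≠ M' := fun h => hne (by subst h; rfl)
      exact ((h𝓜disj hM hM' hMM).preimage f).mono Set.inter_subset_right Set.inter_subset_right
    · exact (h𝓛disj hL hL' hLL).mono Set.inter_subset_left Set.inter_subset_left
  · rintro ⟨⟨L, hL⟩, ⟨M, hM⟩⟩
    obtain ⟨a, ha⟩ := h𝓛tr L hL
    obtain ⟨b, hb⟩ := h𝓜tr M hM
    obtain ⟨δL, cL, rfl⟩ := (h𝓛orth _ hL).exists_eq_box
    obtain ⟨δM, cM, rfl⟩ := (h𝓜orth _ hM).exists_eq_box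
    have hpiece : Box δL cL ∩ f ⁻¹' Box δM cM = Box δL cL ∩ Box δM (-a + cM) := by
      ext x
      simp only [Set.mem_inter_iff, Set.mem_preimage]
      refine and_congr_right fun hx => ?_
      rw [ha x hx, ← vadd_box, Set.mem_vadd_set_iff_neg_vadd_mem, neg_neg, vadd_eq_add]
    refine (hpiece ▸ hasBoxPartition_box_inter_box δL δM cL (-a + cM)).isPetMapOn
      ⟨b + a, fun x hx => ?_⟩
    rw [Function.comp_apply, ha x hx.1, hb _ (ha x hx.1 ▸ hx.2), add_assoc]

lemma PetIsomorphic.trans {S T U : Set (Fin N → ℤ)} (h₁ : PetIsomorphic S T)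
    (h₂ : PetIsomorphic T U) : PetIsomorphic S U := by
  obtain ⟨f, hf, hfinj, rfl⟩ := h₁
  obtain ⟨g, hg, hginj, rfl⟩ := h₂
  exact ⟨g ∘ f, hf.comp hg (Set.mapsTo_image f S), hginj.comp hfinj (Set.mapsTo_image f S),
    Set.image_comp g f S⟩

lemma PetIsomorphic.iUnion {ι : Type*} [Finite ι] {S T : ι → Set (Fin N → ℤ)}
    (h : ∀ k, PetIsomorphic (S k) (T k)) (hS : Pairwise fun k k' => Disjoint (S k) (S k'))
    (hT : Pairwise fun k k' => Disjoint (T k) (T k')) : PetIsomorphic (⋃ k, S k) (⋃ k, T k) := by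
  classical
  choose f hf hinj himg using h
  let F : (Fin N → ℤ) → Fin N → ℤ := fun x => if hx : ∃ k, x ∈ S k then f hx.choose x else x
  have hF : ∀ k, Set.EqOn F (f k) (S k) := fun k x hx => by
    have hex : ∃ k, x ∈ S k := ⟨k, hx⟩
    have hk : hex.choose = k := hS.eq (Set.not_disjoint_iff.mpr ⟨x, hex.choose_spec, hx⟩)
    simp only [F, dif_pos hex, hk]
  refine ⟨F, IsPetMapOn.iUnion hS fun k => (hf k).congr (hF k).symm, ?_, ?_⟩
  · intro x hx y hy hxy
    obtain ⟨k, hx⟩ := Set.mem_iUnion.mp hx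
    obtain ⟨k', hy⟩ := Set.mem_iUnion.mp hy
    rw [hF k hx, hF k' hy] at hxy
    obtain rfl : k = k' := hT.eq <| Set.not_disjoint_iff.mpr
      ⟨f k x, himg k ▸ Set.mem_image_of_mem _ hx, hxy ▸ himg k' ▸ Set.mem_image_of_mem _ hy⟩
    exact hinj k hx hy hxy
  · rw [Set.image_iUnion]
    exact Set.iUnion_congr fun k => ((hF k).image_eq).trans (himg k)

lemma PetIsomorphic.union {A B A' B' : Set (Fin N → ℤ)} (hA : PetIsomorphic A A')
    (hB : PetIsomorphic B B') (hd : Disjoint A B) (hd' : Disjoint A' B') :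
    PetIsomorphic (A ∪ B) (A' ∪ B') := by
  rw [Set.union_eq_iUnion, Set.union_eq_iUnion]
  exact PetIsomorphic.iUnion (fun b => by cases b <;> assumption)
    (pairwise_disjoint_on_bool.mpr hd) (pairwise_disjoint_on_bool.mpr hd')

lemma HasBoxPartition.petIsomorphic_vadd {S : Set (Fin N → ℤ)} (hS : HasBoxPartition S)
    (t : Fin N → ℤ) : PetIsomorphic S (t +ᵥ S) :=
  ⟨(t +ᵥ ·), hS.isPetMapOn ⟨t, fun _ _ => rfl⟩, (add_right_injective t).injOn, rfl⟩

lemma HasBoxPartition.petIsomorphic_refl {S : Set (Fin N → ℤ)} (hS : HasBoxPartition S) :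
    PetIsomorphic S S := by
  simpa using hS.petIsomorphic_vadd 0

end PetMap

section Absorb

variable {N : ℕ}

def inwardStep (i : Fin N) (s : Bool) : Fin N → ℤ := Pi.single i (dirSign (some s))

lemma disjoint_face_box_step {δ : Dir N} {i : Fin N} {s : Bool} (hs : δ i = some s)
    (c : Fin N → ℤ) : Disjoint (Box (δ.face i) c) (Box δ (c + inwardStep i s)) := by
  refine disjoint_box_of_coord i (Set.disjoint_left.mpr fun x hx hx' => ?_)
  simp only [Dir.face_self, mem_ival_none, inwardStep, Pi.add_apply, Pi.single_eq_same, hs]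
    at hx hx'
  cases s <;> simp [dirSign] at hx' <;> omega

lemma box_eq_face_union_box_step {δ : Dir N} {i : Fin N} {s : Bool} (hs : δ i = some s)
    (c : Fin N → ℤ) : Box δ c = Box (δ.face i) c ∪ Box δ (c + inwardStep i s) := by
  ext x
  simp only [Set.mem_union, mem_box, inwardStep, Pi.add_apply]
  constructor
  · intro hx
    by_cases hxi : x i = c i
    · refine Or.inl fun j => ?_
      by_cases hj : j = i
      · subst hj; simpa using hxi
      · simpa [Dir.face_of_ne δ hj] using hx j
    · refine Or.inr fun j => ?_
      by_cases hj : j = i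
      · subst hj
        have := hx j
        rw [hs] at this ⊢
        cases s <;> simp [dirSign] at this ⊢ <;> omega
      · simpa [Pi.single_eq_of_ne hj] using hx j
  · rintro (hx | hx) j
    · exact box_subset_box_of_le (Dir.face_lt (by simp [hs])).le c hx j
    · by_cases hj : j = i
      · subst hj
        have := hx j
        rw [hs] at this ⊢
        cases s <;> simp [dirSign] at this ⊢ <;> omega
      · simpa [Pi.single_eq_of_ne hj] using hx j

theorem petIsomorphic_box_union_of_lt {δB δL : Dir N} (hlt : δB < δL) {cB cL : Fin N → ℤ}
    (hdisj : Disjoint (Box δB cB) (Box δL cL)) :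
    PetIsomorphic (Box δB cB ∪ Box δL cL) (Box δL cL) := by
  induction δL using WellFoundedLT.induction generalizing cL with
  | _ δL ih =>
  obtain ⟨i, hi⟩ := Function.ne_iff.mp hlt.ne
  have hBi : δB i = none := (hlt.le i).resolve_right hi
  obtain ⟨s, hs⟩ := Option.ne_none_iff_exists'.mp (hBi ▸ hi).symm
  have hsplit := box_eq_face_union_box_step hs cL
  have hstep := disjoint_face_box_step hs cL
  have hface : δL.face i < δL := Dir.face_lt (by simp [hs])
  have hle : δB ≤ δL.face i := fun j => by
    by_cases hj : j = i
    · exact Or.inl (hj ▸ hBi)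
    · simpa [Dir.face_of_ne δL hj] using hlt.le j
  rcases hle.eq_or_lt with rfl | hlt'
  · have hB : PetIsomorphic (Box (δL.face i) cB) (Box (δL.face i) cL) := by
      simpa [vadd_box] using (hasBoxPartition_box _ cB).petIsomorphic_vadd (cL - cB)
    have hL : PetIsomorphic (Box δL cL) (Box δL (cL + inwardStep i s)) := by
      simpa [vadd_box, add_comm] using (hasBoxPartition_box _ cL).petIsomorphic_vadd
        (inwardStep i s)
    have h := hB.union hL hdisj hstep
    rwa [← hsplit] at h
  · have hsub : Box (δL.face i) cL ⊆ Box δL cL := box_subset_box_of_le hface.le cL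
    have hstep_sub : Box δL (cL + inwardStep i s) ⊆ Box δL cL := hsplit ▸ Set.subset_union_right
    have h := (ih _ hface hlt' (hdisj.mono_right hsub)).union
      (hasBoxPartition_box δL (cL + inwardStep i s)).petIsomorphic_refl
      (Disjoint.union_left (hdisj.mono_right hstep_sub) hstep) hstep
    rwa [Set.union_assoc, ← hsplit] at h

theorem petIsomorphic_biUnion_union_box {Q : Finset (Dir N × (Fin N → ℤ))} {δ : Dir N}
    {c : Fin N → ℤ} (hQ : (Q : Set (Dir N × (Fin N → ℤ))).PairwiseDisjoint fun q => Box q.1 q.2)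
    (hlt : ∀ q ∈ Q, q.1 < δ) (hdisj : ∀ q ∈ Q, Disjoint (Box q.1 q.2) (Box δ c)) :
    PetIsomorphic ((⋃ q ∈ Q, Box q.1 q.2) ∪ Box δ c) (Box δ c) := by
  classical
  induction Q using Finset.induction_on with
  | empty => simpa using (hasBoxPartition_box δ c).petIsomorphic_refl
  | insert q Q hq ih =>
    rw [Finset.coe_insert, Set.pairwiseDisjoint_insert] at hQ
    have ih' := ih hQ.1 (fun p hp => hlt p (Finset.mem_insert_of_mem hp))
      (fun p hp => hdisj p (Finset.mem_insert_of_mem hp))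
    have hqQ : Disjoint (Box q.1 q.2) (⋃ p ∈ Q, Box p.1 p.2) :=
      Set.disjoint_iUnion₂_right.mpr fun p hp => hQ.2 p hp (ne_of_mem_of_not_mem hp hq).symm
    have hqL := hdisj q (Finset.mem_insert_self q Q)
    have h := ((hasBoxPartition_box q.1 q.2).petIsomorphic_refl.union ih' (hqQ.union_right hqL)
      hqL).trans (petIsomorphic_box_union_of_lt (hlt q (Finset.mem_insert_self q Q)) hqL)
    rwa [Finset.set_biUnion_insert, Set.union_assoc]

variable {P : Finset (Dir N × (Fin N → ℤ))}

lemma disjoint_box_biUnion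
    (hP : (P : Set (Dir N × (Fin N → ℤ))).PairwiseDisjoint fun p => Box p.1 p.2)
    {p : Dir N × (Fin N → ℤ)} {B : Finset (Dir N × (Fin N → ℤ))} (hp : p ∈ P) (hB : B ⊆ P)
    (hpB : p ∉ B) : Disjoint (Box p.1 p.2) (⋃ q ∈ B, Box q.1 q.2) :=
  Set.disjoint_iUnion₂_right.mpr fun _ hq => hP hp (hB hq) (ne_of_mem_of_not_mem hq hpB).symm

theorem petIsomorphic_biUnion_filter_dir_eq
    (hP : (P : Set (Dir N × (Fin N → ℤ))).PairwiseDisjoint fun p => Box p.1 p.2) {m : Dir N}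
    (hle : ∀ p ∈ P, p.1 ≤ m) (hm : ∃ p ∈ P, p.1 = m) :
    PetIsomorphic (⋃ p ∈ P, Box p.1 p.2) (⋃ p ∈ P.filter (·.1 = m), Box p.1 p.2) := by
  obtain ⟨p₀, hp₀, rfl⟩ := hm
  -- `P` splits into the lower boxes `Q`, the box `p₀` absorbing them, and the other top boxes `T`.
  set Q := P.filter (·.1 ≠ p₀.1)
  set T := (P.filter (·.1 = p₀.1)).erase p₀
  have hQ : Q ⊆ P := Finset.filter_subset _ P
  have hT : T ⊆ P := (Finset.erase_subset _ _).trans (Finset.filter_subset _ P)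
  have htop : P.filter (·.1 = p₀.1) = insert p₀ T :=
    (Finset.insert_erase (Finset.mem_filter.mpr ⟨hp₀, rfl⟩ : p₀ ∈ P.filter (·.1 = p₀.1))).symm
  have hp₀Q : p₀ ∉ Q := by simp [Q]
  have hp₀T : p₀ ∉ T := Finset.notMem_erase p₀ _
  have hQT : Disjoint (⋃ q ∈ Q, Box q.1 q.2) (⋃ q ∈ T, Box q.1 q.2) :=
    Set.disjoint_iUnion₂_left.mpr fun q hq => disjoint_box_biUnion hP (hQ hq) hT fun hqT => by
      simp [Q, T] at hq hqT
      exact hq.2 hqT.2.2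
  have habsorb := petIsomorphic_biUnion_union_box (hP.subset (Finset.coe_subset.mpr hQ))
    (fun q hq => lt_of_le_of_ne (hle q (hQ hq)) (Finset.mem_filter.mp hq).2)
    (fun q hq => (disjoint_box_biUnion hP hp₀ hQ hp₀Q).symm.mono_left
      (Set.subset_biUnion_of_mem (u := fun q : Dir N × (Fin N → ℤ) => Box q.1 q.2) hq))
  have hTrefl : PetIsomorphic (⋃ q ∈ T, Box q.1 q.2) (⋃ q ∈ T, Box q.1 q.2) :=
    HasBoxPartition.petIsomorphic_refl ⟨T, hP.subset (Finset.coe_subset.mpr hT), rfl⟩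
  have hp₀T' := disjoint_box_biUnion hP hp₀ hT hp₀T
  have h := habsorb.union hTrefl (hQT.union_left hp₀T') hp₀T'
  rw [htop, Finset.set_biUnion_insert]
  convert h using 1
  rw [← Finset.filter_union_filter_not_eq (p := (·.1 = p₀.1)) P, Finset.set_biUnion_union, htop,
    Finset.set_biUnion_insert]
  change _ ∪ ⋃ q ∈ Q, Box q.1 q.2 = _
  ac_rfl

end Absorb

section Rigidity

variable {N : ℕ}

lemma eq_of_ival_subset_biUnion {ι : Type*} {W : Set ι} (hW : W.Finite) {s : Bool} {a : ℤ}
    {d : Option Bool} {w : ι → ℤ} (h : ival (some s) a ⊆ ⋃ k ∈ W, ival d (w k)) : d = some s := by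
  by_contra hne
  cases s
  · refine not_bddBelow_Iic (a := a) (BddBelow.mono h (hW.bddBelow_biUnion.mpr fun k _ => ?_))
    rcases d with _ | _ | _
    · exact bddBelow_singleton
    · exact absurd rfl hne
    · exact bddBelow_Ici
  · refine not_bddAbove_Ici (a := a) (BddAbove.mono h (hW.bddAbove_biUnion.mpr fun k _ => ?_))
    rcases d with _ | _ | _
    · exact bddAbove_singleton
    · exact bddAbove_Iic
    · exact absurd rfl hne

theorem Dir.le_of_box_subset_biUnion {ι : Type*} {W : Set ι} (hW : W.Finite) {ε d : Dir N}
    {u : Fin N → ℤ} {w : ι → Fin N → ℤ} (h : Box ε u ⊆ ⋃ k ∈ W, Box d (w k)) : ε ≤ d := by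
  intro i
  rcases hεi : ε i with _ | s
  · exact Or.inl rfl
  refine Or.inr (eq_of_ival_subset_biUnion hW (a := u i) (w := fun k => w k i)
    fun t ht => ?_).symm
  have hx : Function.update u i t ∈ Box ε u := fun j => by
    by_cases hj : j = i
    · subst hj
      simpa [hεi] using ht
    · simpa [Function.update_of_ne hj] using self_mem_ival _ _
  obtain ⟨k, hk, hxk⟩ := Set.mem_iUnion₂.mp (h hx)
  exact Set.mem_iUnion₂.mpr ⟨k, hk, by simpa using hxk i⟩

end Rigidity

section NormalForm

variable {N : ℕ}

def IsStackNormalForm {ι : Type} (S : Set (Fin N → ℤ)) (St : ι → Set (Fin N → ℤ))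
    (n h : ι → ℕ) : Prop :=
  (∀ j, IsStack (St j) (n j) (h j)) ∧
    (Pairwise fun j j' => Disjoint (St j) (St j')) ∧
    PetIsomorphic S (⋃ j, St j) ∧
    (∀ j j', j ≠ j' → ∀ L, IsOrthantOfRank L (n j) → L ⊆ St j →
      ¬ ∃ L', IsOrthant L' ∧ L' ⊆ St j' ∧ ParallelOrthants L L')

lemma IsStackNormalForm.comp_equiv {ι ι' : Type} {S : Set (Fin N → ℤ)}
    {St : ι → Set (Fin N → ℤ)} {n h : ι → ℕ} (hS : IsStackNormalForm S St n h) (e : ι' ≃ ι) :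
    IsStackNormalForm S (St ∘ e) (n ∘ e) (h ∘ e) :=
  ⟨fun j => hS.1 (e j), fun _ _ hjj' => hS.2.1 (e.injective.ne hjj'),
    (e.surjective.iUnion_comp St).symm ▸ hS.2.2.1,
    fun _ _ hjj' => hS.2.2.2 _ _ (e.injective.ne hjj')⟩

lemma isStack_biUnion_box {ι : Type*} (Q : Finset ι) (δ : Dir N) (w : ι → Fin N → ℤ)
    (hQ : (Q : Set ι).PairwiseDisjoint fun k => Box δ (w k)) :
    IsStack (⋃ k ∈ Q, Box δ (w k)) δ.rank Q.card := by
  let e := Q.equivFin.symm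
  refine ⟨Box δ 0, fun j => w (e j), isOrthantOfRank_box δ 0, fun j j' hne => ?_, ?_⟩
  · simp only [vadd_box, add_zero]
    exact hQ (e j).2 (e j').2 fun h => hne (e.injective (Subtype.ext h))
  · simp only [vadd_box, add_zero]
    rw [e.surjective.iUnion_comp fun k : Q => Box δ (w k), Set.iUnion_subtype]

def farShift (R : ℤ) (m : Dir N) : Fin N → ℤ := fun i => R * dirSign (m i)

def stack (P : Finset (Dir N × (Fin N → ℤ))) (R : ℤ) (m : Dir N) : Set (Fin N → ℤ) :=
  ⋃ p ∈ P.filter (·.1 = m), Box m (farShift R m + p.2)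

variable {P : Finset (Dir N × (Fin N → ℤ))}

lemma isStack_stack (hP : (P : Set (Dir N × (Fin N → ℤ))).PairwiseDisjoint fun p => Box p.1 p.2)
    (R : ℤ) (m : Dir N) : IsStack (stack P R m) m.rank (P.filter (·.1 = m)).card := by
  refine isStack_biUnion_box _ m _ fun p hp q hq hne => ?_
  rw [Finset.coe_filter] at hp hq
  obtain ⟨hp, rfl⟩ := hp
  obtain ⟨hq, hqm⟩ := hq
  simp only [Function.onFun, ← vadd_box, Set.disjoint_vadd_set]
  have h := hP hp hq hne
  rwa [Function.onFun, hqm] at h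

lemma disjoint_ival_far {C R : ℤ} (hR : 2 * C < R) {s : Bool} {d : Option Bool}
    (hd : d ≠ some s) {c c' : ℤ} (hc : |c| ≤ C) (hc' : |c'| ≤ C) :
    Disjoint (ival (some s) (R * dirSign (some s) + c)) (ival d (R * dirSign d + c')) := by
  rw [abs_le] at hc hc'
  rw [Set.disjoint_left]
  cases s <;> rcases d with _ | _ | _ <;> simp_all [dirSign] <;> intro x <;> omega

lemma disjoint_stack {C R : ℤ} (hC : ∀ p ∈ P, ∀ i, |p.2 i| ≤ C) (hR : 2 * C < R) {m m' : Dir N}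
    (h : ¬ m ≤ m') : Disjoint (stack P R m) (stack P R m') := by
  obtain ⟨i, hi⟩ : ∃ i, m i ≠ none ∧ m i ≠ m' i := by simpa [Dir.le_def, not_or] using h
  obtain ⟨s, hs⟩ := Option.ne_none_iff_exists'.mp hi.1
  simp only [stack, Set.disjoint_iUnion₂_left, Set.disjoint_iUnion₂_right]
  intro p hp q hq
  refine disjoint_box_of_coord i ?_
  simp only [farShift, Pi.add_apply, hs]
  exact disjoint_ival_far hR (hs ▸ hi.2).symm (hC q (Finset.mem_filter.mp hq).1 i)
    (hC p (Finset.mem_filter.mp hp).1 i)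

lemma le_of_box_subset_stack {R : ℤ} {ε m : Dir N} {u : Fin N → ℤ}
    (h : Box ε u ⊆ stack P R m) : ε ≤ m :=
  Dir.le_of_box_subset_biUnion (w := fun p => farShift R m + p.2)
    (P.filter (·.1 = m)).finite_toSet (by rwa [Finset.set_biUnion_coe])

lemma petIsomorphic_stack
    (hP : (P : Set (Dir N × (Fin N → ℤ))).PairwiseDisjoint fun p => Box p.1 p.2)
    (R : ℤ) (m : Dir N) :
    PetIsomorphic (⋃ p ∈ P.filter (·.1 = m), Box p.1 p.2) (stack P R m) := by
  have hstack : stack P R m = farShift R m +ᵥ ⋃ p ∈ P.filter (·.1 = m), Box p.1 p.2 := by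
    rw [Set.vadd_set_iUnion₂]
    refine Set.iUnion₂_congr fun p hp => ?_
    rw [vadd_box, (Finset.mem_filter.mp hp).2]
  rw [hstack]
  exact HasBoxPartition.petIsomorphic_vadd
    ⟨_, hP.subset (Finset.coe_subset.mpr (Finset.filter_subset _ P)), rfl⟩ _

lemma exists_abs_corner_le (P : Finset (Dir N × (Fin N → ℤ))) :
    ∃ C : ℤ, ∀ p ∈ P, ∀ i, |p.2 i| ≤ C :=
  ⟨∑ p ∈ P, ∑ i, |p.2 i|, fun p hp i =>
    (Finset.single_le_sum (f := fun i => |p.2 i|) (fun _ _ => abs_nonneg _)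
      (Finset.mem_univ i)).trans
      (Finset.single_le_sum (f := fun p : Dir N × (Fin N → ℤ) => ∑ i, |p.2 i|)
        (fun _ _ => Finset.sum_nonneg fun _ _ => abs_nonneg _) hp)⟩

lemma petIsomorphic_iUnion_stack
    (hP : (P : Set (Dir N × (Fin N → ℤ))).PairwiseDisjoint fun p => Box p.1 p.2)
    {C R : ℤ} (hC : ∀ p ∈ P, ∀ i, |p.2 i| ≤ C) (hR : 2 * C < R) {μ : Dir N × (Fin N → ℤ) → Dir N}
    (hμle : ∀ p ∈ P, p.1 ≤ μ p) (hμmax : ∀ p ∈ P, Maximal (· ∈ P.image Prod.fst) (μ p)) :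
    PetIsomorphic (⋃ p ∈ P, Box p.1 p.2)
      (⋃ m : {m // Maximal (· ∈ P.image Prod.fst) m}, stack P R m) := by
  have hcover : ⋃ p ∈ P, Box p.1 p.2 =
      ⋃ m : {m // Maximal (· ∈ P.image Prod.fst) m}, ⋃ p ∈ P.filter (μ · = m.1), Box p.1 p.2 := by
    ext x
    simp only [Set.mem_iUnion, Finset.mem_filter, exists_prop]
    exact ⟨fun ⟨p, hp, hx⟩ => ⟨⟨μ p, hμmax p hp⟩, p, ⟨hp, rfl⟩, hx⟩,
      fun ⟨_, p, ⟨hp, _⟩, hx⟩ => ⟨p, hp, hx⟩⟩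
  rw [hcover]
  refine PetIsomorphic.iUnion (fun m => ?_) (fun m m' hne => ?_) (fun m m' hne => ?_)
  · obtain ⟨p, hp, hpm⟩ := Finset.mem_image.mp m.2.1
    have hfix : ∀ q ∈ P, q.1 = m.1 → μ q = m.1 := fun q hq hqm =>
      (m.2.eq_of_le (hμmax q hq).1 (hqm ▸ hμle q hq)).symm
    have hfilter : (P.filter (μ · = m.1)).filter (·.1 = m.1) = P.filter (·.1 = m.1) := by
      ext q
      simp only [Finset.mem_filter]
      exact ⟨fun h => ⟨h.1.1, h.2⟩, fun h => ⟨⟨h.1, hfix q h.1 h.2⟩, h.2⟩⟩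
    have h := petIsomorphic_biUnion_filter_dir_eq (m := m.1)
      (hP.subset (Finset.coe_subset.mpr (Finset.filter_subset (μ · = m.1) P)))
      (fun q hq => (Finset.mem_filter.mp hq).2 ▸ hμle q (Finset.mem_filter.mp hq).1)
      ⟨p, Finset.mem_filter.mpr ⟨hp, hfix p hp hpm⟩, hpm⟩
    rw [hfilter] at h
    exact h.trans (petIsomorphic_stack hP R m)
  · refine Set.disjoint_iUnion₂_left.mpr fun p hp => Set.disjoint_iUnion₂_right.mpr fun q hq => ?_
    simp only [Finset.mem_filter] at hp hq
    exact hP hp.1 hq.1 fun hpq => hne (Subtype.ext (hp.2.symm.trans (hpq ▸ hq.2)))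
  · exact disjoint_stack hC hR fun hle => hne (Subtype.ext (m.2.eq_of_le m'.2.1 hle))

lemma not_vadd_subset_stack {R : ℤ} {m m' : Dir N} (hincomp : ¬ m ≤ m')
    {L : Set (Fin N → ℤ)} (hL : IsOrthantOfRank L m.rank) (hLsub : L ⊆ stack P R m)
    (a : Fin N → ℤ) : ¬ a +ᵥ L ⊆ stack P R m' := by
  obtain ⟨ε, u, rfl, hrank⟩ := hL.exists_eq_box
  obtain rfl : ε = m := Dir.eq_of_le_of_rank_le (le_of_box_subset_stack hLsub) hrank.ge
  rw [vadd_box]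
  exact fun h => hincomp (le_of_box_subset_stack h)

theorem exists_isStackNormalForm
    (hP : (P : Set (Dir N × (Fin N → ℤ))).PairwiseDisjoint fun p => Box p.1 p.2) :
    ∃ (ι : Type) (_ : Finite ι) (St : ι → Set (Fin N → ℤ)) (n h : ι → ℕ),
      IsStackNormalForm (⋃ p ∈ P, Box p.1 p.2) St n h := by
  obtain ⟨C, hC⟩ := exists_abs_corner_le P
  choose! μ hμle hμmax using fun p (hp : p ∈ P) =>
    (P.image Prod.fst).exists_le_maximal (Finset.mem_image_of_mem Prod.fst hp)
  have hincomp : ∀ m m' : {m // Maximal (· ∈ P.image Prod.fst) m}, m ≠ m' → ¬ m.1 ≤ m'.1 :=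
    fun m m' hne hle => hne (Subtype.ext (m.2.eq_of_le m'.2.1 hle))
  refine ⟨{m // Maximal (· ∈ P.image Prod.fst) m}, inferInstance, fun m => stack P (2 * C + 1) m,
    fun m => m.1.rank, fun m => (P.filter (·.1 = m.1)).card, fun m => isStack_stack hP _ _,
    fun m m' hne => disjoint_stack hC (by omega) (hincomp m m' hne),
    petIsomorphic_iUnion_stack hP hC (by omega) hμle hμmax, ?_⟩
  rintro m m' hne L hL hLsub ⟨L', -, hL'sub, a, rfl⟩
  exact not_vadd_subset_stack (hincomp m m' hne) hL hLsub a hL'sub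

end NormalForm

theorem stmt5_general {N : ℕ} (S : Set (Fin N → ℤ)) (hS : IsOrthohedral S) :
    ∃ (m : ℕ) (St : Fin m → Set (Fin N → ℤ)) (n h : Fin m → ℕ),
      (∀ j, IsStack (St j) (n j) (h j)) ∧
      (Pairwise fun j j' => Disjoint (St j) (St j')) ∧
      PetIsomorphic S (⋃ j, St j) ∧
      (∀ j j', j ≠ j' → ∀ L, IsOrthantOfRank L (n j) → L ⊆ St j →
        ¬ ∃ L', IsOrthant L' ∧ L' ⊆ St j' ∧ ParallelOrthants L L') := by
  obtain ⟨P, hP, rfl⟩ := hS.hasBoxPartition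
  obtain ⟨ι, _, St, n, h, hnf⟩ := exists_isStackNormalForm hP
  let e := (Finite.equivFin ι).symm
  exact ⟨Nat.card ι, St ∘ e, n ∘ e, h ∘ e, hnf.comp_equiv e⟩

/-- pet-normal form: every orthohedral set of rank `< N` is pet-isomorphic
to a disjoint union of stacks such that no maximal orthant of one stack is parallel to a
suborthant of another stack. -/
theorem stmt5 {N : ℕ} (S : Set (Fin N → ℤ)) (hS : IsOrthohedral S)
    (hrk : orthRank S < N) :
    ∃ (m : ℕ) (St : Fin m → Set (Fin N → ℤ)) (n h : Fin m → ℕ),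
      (∀ j, IsStack (St j) (n j) (h j)) ∧
      (Pairwise fun j j' => Disjoint (St j) (St j')) ∧
      PetIsomorphic S (⋃ j, St j) ∧
      (∀ j j', j ≠ j' → ∀ L, IsOrthantOfRank L (n j) → L ⊆ St j →
        ¬ ∃ L', IsOrthant L' ∧ L' ⊆ St j' ∧ ParallelOrthants L L') :=
  stmt5_general S hS

end PeiPaper
end

section
/- If f: S → S' is a pet-isomorphism between quasi-normal orthohedral sets, then the induced map on germs sends maximal germs bijectively to maximal germs, and the height functions of S and S' agree: h_S = h_{S'}. -/
open Pointwise

namespace PeiPaper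

/-!
Integral orthogonal matrices are signed permutation matrices, so every orthant is a coordinate
orthant `coordOrthant a ε Y`, and two orthants are commensurable exactly when they have the same
free coordinates `Y`, the same directions on `Y` and the same fixed coordinates off `Y`. Hence
commensurable orthants are translates of each other and germs have well-defined indicators.

An orthant covered by finitely many orthants has a commensurable sub-orthant inside one of them
(pigeonhole along a diagonal ray). So a pet-map is a translation on some representative of every
germ, which gives a rank- and indicator-preserving map on germs; the inverse pet-map induces its
inverse. A germ whose indicator is a maximal based orthant of `S_τ` is maximal, and by
quasi-normality (maximal germs being finitely many) the converse holds. Since a pet-isomorphism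
also gives `S_τ = S'_τ`, the bijection on germs preserves maximality and indicators.
-/

section CoordOrthant

variable {N : ℕ}

/-- The orthant with apex `a` whose free coordinates are `Y`, running upwards in coordinate `j`
iff `ε j`; the value of `ε` off `Y` is irrelevant. -/
def coordOrthant (a : Fin N → ℤ) (ε : Fin N → Bool) (Y : Finset (Fin N)) : Set (Fin N → ℤ) :=
  {x | (∀ j ∈ Y, if ε j then a j ≤ x j else x j ≤ a j) ∧ ∀ j ∉ Y, x j = a j}

theorem mem_coordOrthant {a x : Fin N → ℤ} {ε : Fin N → Bool} {Y : Finset (Fin N)} :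
    x ∈ coordOrthant a ε Y ↔
      (∀ j ∈ Y, if ε j then a j ≤ x j else x j ≤ a j) ∧ ∀ j ∉ Y, x j = a j :=
  Iff.rfl

theorem apex_mem_coordOrthant (a : Fin N → ℤ) (ε : Fin N → Bool) (Y : Finset (Fin N)) :
    a ∈ coordOrthant a ε Y :=
  ⟨fun j _ => by split <;> rfl, fun _ _ => rfl⟩

theorem coordOrthant_congr {a : Fin N → ℤ} {ε ε' : Fin N → Bool} {Y : Finset (Fin N)}
    (h : Set.EqOn ε ε' Y) : coordOrthant a ε Y = coordOrthant a ε' Y := by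
  ext x
  refine and_congr_left' (forall₂_congr fun j hj => ?_)
  rw [h hj]

theorem vadd_coordOrthant (c a : Fin N → ℤ) (ε : Fin N → Bool) (Y : Finset (Fin N)) :
    c +ᵥ coordOrthant a ε Y = coordOrthant (c + a) ε Y := by
  ext x
  rw [Set.mem_vadd_set_iff_neg_vadd_mem]
  simp only [mem_coordOrthant, vadd_eq_add, Pi.add_apply, Pi.neg_apply]
  refine and_congr (forall₂_congr fun j _ => ?_) (forall₂_congr fun j _ => ?_) <;>
    [split; skip] <;> omega

theorem update_mem_coordOrthant {a : Fin N → ℤ} {ε : Fin N → Bool} {Y : Finset (Fin N)}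
    {j : Fin N} (hj : j ∈ Y) {t : ℤ} (ht : 0 ≤ t) :
    Function.update a j (if ε j then a j + t else a j - t) ∈ coordOrthant a ε Y := by
  refine ⟨fun i _ => ?_, fun i hi => Function.update_of_ne (by rintro rfl; exact hi hj) _ _⟩
  rcases eq_or_ne i j with rfl | hij
  · rw [Function.update_self]; cases ε i <;> simp <;> omega
  · rw [Function.update_of_ne hij]; split <;> rfl

theorem coordOrthant_subset_coordOrthant_iff {a a' : Fin N → ℤ} {ε ε' : Fin N → Bool}
    {Y Y' : Finset (Fin N)} :
    coordOrthant a' ε' Y' ⊆ coordOrthant a ε Y ↔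
      a' ∈ coordOrthant a ε Y ∧ Y' ⊆ Y ∧ Set.EqOn ε' ε Y' := by
  constructor
  · intro h
    have ha' := h (apex_mem_coordOrthant a' ε' Y')
    have far : ∀ j ∈ Y', ∀ t : ℤ, 0 ≤ t →
        Function.update a' j (if ε' j then a' j + t else a' j - t) ∈ coordOrthant a ε Y :=
      fun j hj t ht => h (update_mem_coordOrthant hj ht)
    have hY : Y' ⊆ Y := by
      intro j hj
      by_contra hjY
      have h1 := (far j hj 1 zero_le_one).2 j hjY
      rw [Function.update_self, ← ha'.2 j hjY] at h1
      split at h1 <;> omega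
    refine ⟨ha', hY, fun j hj => ?_⟩
    have h1 := (far j hj (|a j - a' j| + 1) (by positivity)).1 j (hY hj)
    rw [Function.update_self] at h1
    have := le_abs_self (a j - a' j)
    have := neg_abs_le (a j - a' j)
    revert h1; cases ε' j <;> cases ε j <;> simp <;> omega
  · rintro ⟨ha', hY, hε⟩ x ⟨hx, hx'⟩
    refine ⟨fun j hj => ?_, fun j hj => (hx' j (fun h => hj (hY h))).trans (ha'.2 j hj)⟩
    have h1 := ha'.1 j hj
    by_cases hj' : j ∈ Y'
    · have h2 := hx j hj'
      rw [hε hj'] at h2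
      revert h1 h2; cases ε j <;> simp <;> omega
    · rwa [hx' j hj']


theorem exists_eq_single_of_sum_mul_self_eq_one {ι : Type*} [Fintype ι] [DecidableEq ι]
    {v : ι → ℤ} (h : ∑ l, v l * v l = 1) : ∃ j, (v j = 1 ∨ v j = -1) ∧ ∀ l ≠ j, v l = 0 := by
  obtain ⟨j, hj⟩ : ∃ j, v j ≠ 0 := by
    by_contra! h0
    simp [h0] at h
  have hpos : 0 < v j * v j := mul_self_pos.2 hj
  have hrest : 0 ≤ ∑ l ∈ Finset.univ.erase j, v l * v l :=
    Finset.sum_nonneg fun l _ => mul_self_nonneg (v l)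
  rw [← Finset.add_sum_erase _ _ (Finset.mem_univ j)] at h
  refine ⟨j, Int.eq_one_or_neg_one_of_mul_eq_one (show v j * v j = 1 by omega), fun l hl => ?_⟩
  have := (Finset.sum_eq_zero_iff_of_nonneg fun l _ => mul_self_nonneg (v l)).1 (by omega) l
    (Finset.mem_erase.2 ⟨hl, Finset.mem_univ l⟩)
  exact mul_self_eq_zero.1 this

theorem IsOrthMat.exists_signedPerm {A : Matrix (Fin N) (Fin N) ℤ} (hA : IsOrthMat A) :
    ∃ π : Equiv.Perm (Fin N), ∀ i, (A i (π i) = 1 ∨ A i (π i) = -1) ∧ ∀ l ≠ π i, A i l = 0 := by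
  have hdot : ∀ i i', ∑ l, A i l * A i' l = if i = i' then 1 else 0 := fun i i' => by
    simpa [Matrix.mul_apply, Matrix.one_apply] using congrFun₂ hA i i'
  choose κ hκ using fun i => exists_eq_single_of_sum_mul_self_eq_one (by simpa using hdot i i)
  have hinj : Function.Injective κ := by
    intro i i' h
    by_contra hne
    have := hdot i i'
    rw [if_neg hne, Finset.sum_eq_single (κ i) (fun l _ hl => by rw [(hκ i).2 l hl, zero_mul])
      (by simp), h] at this
    have h1 := (hκ i).1
    rw [h] at h1
    rcases h1 with h1 | h1 <;> rcases (hκ i').1 with h2 | h2 <;> simp [h1, h2] at this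
  exact ⟨Equiv.ofBijective κ (Finite.injective_iff_bijective.1 hinj), hκ⟩

theorem image_stdFace_eq_coordOrthant {A : Matrix (Fin N) (Fin N) ℤ} {π : Equiv.Perm (Fin N)}
    (hπ : ∀ i, (A i (π i) = 1 ∨ A i (π i) = -1) ∧ ∀ l ≠ π i, A i l = 0)
    (a : Fin N → ℤ) (Y : Finset (Fin N)) :
    (fun v => a + A.mulVec v) '' stdFace N Y =
      coordOrthant a (fun j => decide (A j (π j) = 1)) (Y.map π.symm.toEmbedding) := by
  have hmulVec : ∀ v j, A.mulVec v j = A j (π j) * v (π j) := fun v j =>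
    (Matrix.mulVec_apply_eq_sum A v j).trans <|
      Finset.sum_eq_single (π j) (fun l _ hl => by rw [(hπ j).2 l hl, zero_mul]) (by simp)
  ext x
  simp only [Set.mem_image, mem_coordOrthant, Finset.mem_map_equiv, Equiv.symm_symm]
  constructor
  · rintro ⟨v, ⟨hv, hv'⟩, rfl⟩
    refine ⟨fun j _ => ?_, fun j hj => ?_⟩
    · have := hv (π j)
      rcases (hπ j).1 with h | h <;> simp [hmulVec, h] <;> omega
    · simp [hmulVec, hv' _ hj]
  · rintro ⟨hx, hx'⟩
    refine ⟨fun l => A (π.symm l) l * (x (π.symm l) - a (π.symm l)), ⟨fun l => ?_, fun l hl => ?_⟩,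
      funext fun j => ?_⟩
    · obtain ⟨j, rfl⟩ := π.surjective l
      simp only [Equiv.symm_apply_apply]
      by_cases hj : π j ∈ Y
      · have := hx j hj
        rcases (hπ j).1 with h | h <;> simp [h] at this ⊢ <;> omega
      · simp [hx' j hj]
    · obtain ⟨j, rfl⟩ := π.surjective l
      simp [hx' j hl]
    · rcases (hπ j).1 with h | h <;> simp [hmulVec, h]

theorem exists_isOrthMat_image_stdFace_eq (a : Fin N → ℤ) (ε : Fin N → Bool)
    (Y : Finset (Fin N)) :
    ∃ A, IsOrthMat A ∧ (fun v => a + A.mulVec v) '' stdFace N Y = coordOrthant a ε Y := by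
  set D : Matrix (Fin N) (Fin N) ℤ := Matrix.diagonal fun j => if ε j then 1 else -1
  have hD : ∀ i, (D i (Equiv.refl _ i) = 1 ∨ D i (Equiv.refl _ i) = -1) ∧
      ∀ l ≠ Equiv.refl _ i, D i l = 0 :=
    fun i => ⟨by cases ε i <;> simp [D], fun l hl => Matrix.diagonal_apply_ne _ hl.symm⟩
  refine ⟨D, ?_, ?_⟩
  · rw [IsOrthMat, Matrix.diagonal_transpose, Matrix.diagonal_mul_diagonal, ← Matrix.diagonal_one]
    congr 1
    funext j
    cases ε j <;> simp
  · rw [image_stdFace_eq_coordOrthant hD]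
    simp only [Equiv.refl_symm, Equiv.refl_toEmbedding, Finset.map_refl]
    exact coordOrthant_congr fun j _ => by cases h : ε j <;> simp [D, h]

theorem isOrthantOfRank_iff {L : Set (Fin N → ℤ)} {k : ℕ} :
    IsOrthantOfRank L k ↔ ∃ a ε Y, Y.card = k ∧ L = coordOrthant a ε Y := by
  constructor
  · rintro ⟨a, A, Y, hA, rfl, rfl⟩
    obtain ⟨π, hπ⟩ := hA.exists_signedPerm
    exact ⟨a, _, _, Finset.card_map _, image_stdFace_eq_coordOrthant hπ a Y⟩
  · rintro ⟨a, ε, Y, rfl, rfl⟩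
    obtain ⟨A, hA, h⟩ := exists_isOrthMat_image_stdFace_eq a ε Y
    exact ⟨a, A, Y, hA, rfl, h.symm⟩

theorem isOrthantOfRank_coordOrthant (a : Fin N → ℤ) (ε : Fin N → Bool) (Y : Finset (Fin N)) :
    IsOrthantOfRank (coordOrthant a ε Y) Y.card :=
  isOrthantOfRank_iff.2 ⟨a, ε, Y, rfl, rfl⟩

theorem IsBasedOrthant.exists_eq_coordOrthant {L0 : Set (Fin N → ℤ)} (h : IsBasedOrthant L0) :
    ∃ ε Y, L0 = coordOrthant 0 ε Y := by
  obtain ⟨A, Y, hA, rfl⟩ := h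
  obtain ⟨π, hπ⟩ := hA.exists_signedPerm
  exact ⟨_, _, by simpa only [zero_add] using image_stdFace_eq_coordOrthant hπ 0 Y⟩

theorem IsBasedOrthant.isOrthant_vadd {L0 : Set (Fin N → ℤ)} (h : IsBasedOrthant L0)
    (a : Fin N → ℤ) : IsOrthant (a +ᵥ L0) := by
  obtain ⟨A, Y, hA, rfl⟩ := h
  exact ⟨Y.card, a, A, Y, hA, rfl, by rw [← Set.image_vadd, Set.image_image]; rfl⟩

theorem IsOrthantOfRank.exists_eq_vadd {L : Set (Fin N → ℤ)} {k : ℕ} (h : IsOrthantOfRank L k) :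
    ∃ (a : Fin N → ℤ) (L0 : Set (Fin N → ℤ)), IsBasedOrthant L0 ∧ L = a +ᵥ L0 := by
  obtain ⟨a, A, Y, hA, -, rfl⟩ := h
  exact ⟨a, _, ⟨A, Y, hA, rfl⟩, by rw [← Set.image_vadd, Set.image_image]; rfl⟩

theorem IsOrthantOfRank.vadd {L : Set (Fin N → ℤ)} {k : ℕ} (h : IsOrthantOfRank L k)
    (c : Fin N → ℤ) : IsOrthantOfRank (c +ᵥ L) k := by
  obtain ⟨a, ε, Y, rfl, rfl⟩ := isOrthantOfRank_iff.1 h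
  exact vadd_coordOrthant c a ε Y ▸ isOrthantOfRank_coordOrthant (c + a) ε Y

end CoordOrthant

section Commensurable

variable {N : ℕ}

theorem IsOrthantOfRank.le_of_subset {L L' : Set (Fin N → ℤ)} {k m : ℕ}
    (hL : IsOrthantOfRank L k) (hL' : IsOrthantOfRank L' m) (h : L ⊆ L') : k ≤ m := by
  obtain ⟨a, ε, Y, rfl, rfl⟩ := isOrthantOfRank_iff.1 hL
  obtain ⟨a', ε', Y', rfl, rfl⟩ := isOrthantOfRank_iff.1 hL'
  exact Finset.card_le_card (coordOrthant_subset_coordOrthant_iff.1 h).2.1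

theorem orthRank_eq_of_subset_of_subset {W T L : Set (Fin N → ℤ)} {k : ℕ}
    (hW : IsOrthantOfRank W k) (hL : IsOrthantOfRank L k) (hWT : W ⊆ T) (hTL : T ⊆ L) :
    orthRank T = k :=
  IsGreatest.csSup_eq ⟨⟨W, hW, hWT⟩, fun _ ⟨_, hM, hMT⟩ => hM.le_of_subset hL (hMT.trans hTL)⟩

theorem IsOrthantOfRank.orthRank_eq {L : Set (Fin N → ℤ)} {k : ℕ} (hL : IsOrthantOfRank L k) :
    orthRank L = k :=
  orthRank_eq_of_subset_of_subset hL hL subset_rfl subset_rfl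

theorem isOrthantOfRank_singleton (x : Fin N → ℤ) : IsOrthantOfRank {x} 0 :=
  isOrthantOfRank_iff.2 ⟨x, fun _ => true, ∅, rfl, by ext y; simp [mem_coordOrthant, funext_iff]⟩

theorem exists_isOrthantOfRank_orthRank {T L : Set (Fin N → ℤ)} {k : ℕ}
    (hL : IsOrthantOfRank L k) (hT : T.Nonempty) (hTL : T ⊆ L) :
    ∃ W, IsOrthantOfRank W (orthRank T) ∧ W ⊆ T :=
  Nat.sSup_mem (s := {m | ∃ W, IsOrthantOfRank W m ∧ W ⊆ T})
    (hT.elim fun x hx => ⟨0, {x}, isOrthantOfRank_singleton x, by simpa using hx⟩)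
    ⟨k, fun _ ⟨_, hM, hMT⟩ => hM.le_of_subset hL (hMT.trans hTL)⟩

theorem commensurable_coordOrthant_iff {a a' : Fin N → ℤ} {ε ε' : Fin N → Bool}
    {Y Y' : Finset (Fin N)} :
    Commensurable (coordOrthant a ε Y) (coordOrthant a' ε' Y') ↔
      Y = Y' ∧ Set.EqOn ε ε' Y ∧ Set.EqOn a a' (↑Y)ᶜ := by
  have hL := isOrthantOfRank_coordOrthant a ε Y
  have hL' := isOrthantOfRank_coordOrthant a' ε' Y'
  constructor
  · rintro ⟨hne, h, h'⟩
    rw [hL.orthRank_eq] at h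
    rw [hL'.orthRank_eq] at h'
    obtain ⟨W, hW, hWT⟩ := exists_isOrthantOfRank_orthRank hL hne Set.inter_subset_left
    obtain ⟨w, η, Z, hZ, rfl⟩ := isOrthantOfRank_iff.1 hW
    obtain ⟨hw, hZY, hη⟩ :=
      coordOrthant_subset_coordOrthant_iff.1 (hWT.trans Set.inter_subset_left)
    obtain ⟨hw', hZY', hη'⟩ :=
      coordOrthant_subset_coordOrthant_iff.1 (hWT.trans Set.inter_subset_right)
    obtain rfl := Finset.eq_of_subset_of_card_le hZY (by omega)
    obtain rfl := Finset.eq_of_subset_of_card_le hZY' (by omega)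
    exact ⟨rfl, fun j hj => (hη hj).symm.trans (hη' hj),
      fun j hj => (hw.2 j hj).symm.trans (hw'.2 j hj)⟩
  · rintro ⟨rfl, hε, ha⟩
    set c : Fin N → ℤ := fun j =>
      if j ∈ Y then (if ε j then max (a j) (a' j) else min (a j) (a' j)) else a j
    have hc : c ∈ coordOrthant a ε Y ∧ c ∈ coordOrthant a' ε' Y := by
      refine ⟨⟨fun j hj => ?_, fun j hj => if_neg hj⟩, ⟨fun j hj => ?_, fun j hj => ?_⟩⟩
      · simp only [c, if_pos hj]; cases ε j <;> simp
      · rw [← hε hj]; simp only [c, if_pos hj]; cases ε j <;> simp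
      · simp only [c, if_neg hj]; exact ha hj
    have hWT : coordOrthant c ε Y ⊆ coordOrthant a ε Y ∩ coordOrthant a' ε' Y :=
      Set.subset_inter
        (coordOrthant_subset_coordOrthant_iff.2 ⟨hc.1, subset_rfl, Set.eqOn_refl _ _⟩)
        (coordOrthant_subset_coordOrthant_iff.2 ⟨hc.2, subset_rfl, hε⟩)
    rw [Commensurable, orthRank_eq_of_subset_of_subset (isOrthantOfRank_coordOrthant c ε Y) hL hWT
      Set.inter_subset_left, hL.orthRank_eq, hL'.orthRank_eq]
    exact ⟨⟨c, hWT (apex_mem_coordOrthant c ε Y)⟩, rfl, rfl⟩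

theorem IsOrthant.exists_eq_coordOrthant {L : Set (Fin N → ℤ)} (hL : IsOrthant L) :
    ∃ a ε Y, L = coordOrthant a ε Y :=
  let ⟨_, hk⟩ := hL
  let ⟨a, ε, Y, _, h⟩ := isOrthantOfRank_iff.1 hk
  ⟨a, ε, Y, h⟩

theorem Commensurable.symm {L L' : Set (Fin N → ℤ)} (h : Commensurable L L') :
    Commensurable L' L := by
  obtain ⟨hne, h1, h2⟩ := h
  rw [Set.inter_comm] at hne h1 h2
  exact ⟨hne, h2, h1⟩

theorem Commensurable.trans {L L' L'' : Set (Fin N → ℤ)} (hL : IsOrthant L) (hL' : IsOrthant L')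
    (hL'' : IsOrthant L'') (h : Commensurable L L') (h' : Commensurable L' L'') :
    Commensurable L L'' := by
  obtain ⟨a, ε, Y, rfl⟩ := hL.exists_eq_coordOrthant
  obtain ⟨a', ε', Y', rfl⟩ := hL'.exists_eq_coordOrthant
  obtain ⟨a'', ε'', Y'', rfl⟩ := hL''.exists_eq_coordOrthant
  obtain ⟨rfl, hε, ha⟩ := commensurable_coordOrthant_iff.1 h
  obtain ⟨rfl, hε', ha'⟩ := commensurable_coordOrthant_iff.1 h'
  exact commensurable_coordOrthant_iff.2 ⟨rfl, hε.trans hε', ha.trans ha'⟩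

theorem Commensurable.vadd {L L' : Set (Fin N → ℤ)} (hL : IsOrthant L) (hL' : IsOrthant L')
    (h : Commensurable L L') (c : Fin N → ℤ) : Commensurable (c +ᵥ L) (c +ᵥ L') := by
  obtain ⟨a, ε, Y, rfl⟩ := hL.exists_eq_coordOrthant
  obtain ⟨a', ε', Y', rfl⟩ := hL'.exists_eq_coordOrthant
  obtain ⟨rfl, hε, ha⟩ := commensurable_coordOrthant_iff.1 h
  rw [vadd_coordOrthant, vadd_coordOrthant, commensurable_coordOrthant_iff]
  exact ⟨rfl, hε, fun j hj => congrArg (c j + ·) (ha hj)⟩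

theorem Commensurable.exists_eq_vadd {L L' : Set (Fin N → ℤ)} (hL : IsOrthant L)
    (hL' : IsOrthant L') (h : Commensurable L L') : ∃ c : Fin N → ℤ, L' = c +ᵥ L := by
  obtain ⟨a, ε, Y, rfl⟩ := hL.exists_eq_coordOrthant
  obtain ⟨a', ε', Y', rfl⟩ := hL'.exists_eq_coordOrthant
  obtain ⟨rfl, hε, -⟩ := commensurable_coordOrthant_iff.1 h
  exact ⟨a' - a, by rw [vadd_coordOrthant, sub_add_cancel, coordOrthant_congr hε]⟩

theorem commensurable_of_subset {L L' : Set (Fin N → ℤ)} {k : ℕ} (hL : IsOrthantOfRank L k)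
    (hL' : IsOrthantOfRank L' k) (h : L ⊆ L') : Commensurable L L' := by
  obtain ⟨a, ε, Y, rfl, rfl⟩ := isOrthantOfRank_iff.1 hL
  rw [Commensurable, Set.inter_eq_left.2 h, hL.orthRank_eq, hL'.orthRank_eq]
  exact ⟨⟨a, apex_mem_coordOrthant a ε Y⟩, rfl, rfl⟩

theorem exists_mem_coordOrthant_subset_of_subset_sUnion {𝓛 : Set (Set (Fin N → ℤ))}
    (hfin : 𝓛.Finite) (horth : ∀ P ∈ 𝓛, IsOrthant P) {b : Fin N → ℤ} {ε : Fin N → Bool}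
    {Y : Finset (Fin N)} (h : coordOrthant b ε Y ⊆ ⋃₀ 𝓛) :
    ∃ P ∈ 𝓛, ∃ b' ∈ coordOrthant b ε Y, coordOrthant b' ε Y ⊆ P := by
  set x : ℕ → Fin N → ℤ := fun t j =>
    if j ∈ Y then (if ε j then b j + t else b j - t) else b j
  have hx : ∀ t, x t ∈ coordOrthant b ε Y := fun t =>
    ⟨fun j hj => by simp only [x, if_pos hj]; cases ε j <;> simp, fun j hj => if_neg hj⟩
  obtain ⟨P, hP, hT⟩ : ∃ P ∈ 𝓛, {t | x t ∈ P}.Infinite := by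
    by_contra! hfin'
    refine Set.infinite_univ ((hfin.biUnion hfin').subset fun t _ => ?_)
    obtain ⟨P, hP, htP⟩ := h (hx t)
    exact Set.mem_biUnion hP htP
  obtain ⟨p, δ, Z, rfl⟩ := (horth P hP).exists_eq_coordOrthant
  -- far out along the ray, a coordinate of `Y` that is fixed in `P`, or free in the other
  -- direction, would violate the constraints of `P`
  have hfree : ∀ j ∈ Y, j ∈ Z ∧ ε j = δ j := by
    intro j hj
    obtain ⟨t, ht, hlt⟩ := hT.exists_gt (p j - b j).natAbs
    by_cases hjZ : j ∈ Z
    · refine ⟨hjZ, ?_⟩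
      have := ht.1 j hjZ
      simp only [x, if_pos hj] at this
      revert this; cases δ j <;> cases ε j <;> simp <;> omega
    · have := ht.2 j hjZ
      simp only [x, if_pos hj] at this
      revert this; cases ε j <;> simp <;> omega
  obtain ⟨t, ht⟩ := hT.nonempty
  exact ⟨_, hP, x t, hx t, coordOrthant_subset_coordOrthant_iff.2
    ⟨ht, fun j hj => (hfree j hj).1, fun j hj => (hfree j hj).2⟩⟩

theorem IsOrthantOfRank.exists_commensurable_subset_of_subset_sUnion {L : Set (Fin N → ℤ)}
    {k : ℕ} (hL : IsOrthantOfRank L k) {𝓛 : Set (Set (Fin N → ℤ))} (hfin : 𝓛.Finite)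
    (horth : ∀ P ∈ 𝓛, IsOrthant P) (h : L ⊆ ⋃₀ 𝓛) :
    ∃ P ∈ 𝓛, ∃ L', IsOrthantOfRank L' k ∧ L' ⊆ L ∧ L' ⊆ P ∧ Commensurable L L' := by
  obtain ⟨b, ε, Y, rfl, rfl⟩ := isOrthantOfRank_iff.1 hL
  obtain ⟨P, hP, b', hb', hsub⟩ := exists_mem_coordOrthant_subset_of_subset_sUnion hfin horth h
  exact ⟨P, hP, _, isOrthantOfRank_coordOrthant b' ε Y,
    coordOrthant_subset_coordOrthant_iff.2 ⟨hb', subset_rfl, Set.eqOn_refl _ _⟩, hsub,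
    commensurable_coordOrthant_iff.2 ⟨rfl, Set.eqOn_refl _ _, fun j hj => (hb'.2 j hj).symm⟩⟩

end Commensurable

section Germs

variable {N : ℕ} {S S' : Set (Fin N → ℤ)} {k : ℕ}

theorem germOf_eq_germOf_iff {R R' : germSet S k} :
    germOf S k R = germOf S k R' ↔ Commensurable R.1 R'.1 := by
  refine ⟨fun h => ?_, fun h => Quot.sound h⟩
  have hequiv : Equivalence fun R R' : germSet S k => Commensurable R.1 R'.1 :=
    ⟨fun R => commensurable_of_subset R.2.1 R.2.1 subset_rfl, Commensurable.symm,
      fun {R R' R''} => Commensurable.trans ⟨k, R.2.1⟩ ⟨k, R'.2.1⟩ ⟨k, R''.2.1⟩⟩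
  exact hequiv.eqvGen_iff.1 (Quot.eqvGen_exact h)

/-- `L0` is the indicator `τ` of the germ `x`. -/
def HasIndicator (x : Germ S k) (L0 : Set (Fin N → ℤ)) : Prop :=
  ∃ L : germSet S k, germOf S k L = x ∧ ∃ a : Fin N → ℤ, L.1 = a +ᵥ L0

def GermTranslates (x : Germ S k) (y : Germ S' k) : Prop :=
  ∃ (L : germSet S k) (M : germSet S' k) (a : Fin N → ℤ),
    germOf S k L = x ∧ germOf S' k M = y ∧ M.1 = a +ᵥ L.1

def IsGermImage (f : (Fin N → ℤ) → (Fin N → ℤ)) (x : Germ S k) (y : Germ S' k) : Prop :=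
  ∃ (L : germSet S k) (M : germSet S' k) (a : Fin N → ℤ),
    germOf S k L = x ∧ germOf S' k M = y ∧ M.1 = a +ᵥ L.1 ∧ ∀ z ∈ L.1, f z = a + z

theorem exists_hasIndicator (x : Germ S k) : ∃ L0, IsBasedOrthant L0 ∧ HasIndicator x L0 := by
  obtain ⟨L, rfl⟩ := Quot.exists_rep x
  obtain ⟨a, L0, hL0, hL⟩ := L.2.1.exists_eq_vadd
  exact ⟨L0, hL0, L, rfl, a, hL⟩

theorem GermTranslates.symm {x : Germ S k} {y : Germ S' k} (h : GermTranslates x y) :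
    GermTranslates y x := by
  obtain ⟨L, M, a, hL, hM, hML⟩ := h
  exact ⟨M, L, -a, hM, hL, by rw [hML, neg_vadd_vadd]⟩

theorem GermTranslates.hasIndicator {x : Germ S k} {y : Germ S' k} (h : GermTranslates x y)
    {L0 : Set (Fin N → ℤ)} (hx : HasIndicator x L0) : HasIndicator y L0 := by
  obtain ⟨L, M, a, rfl, rfl, hML⟩ := h
  obtain ⟨L', hL', c, hL'c⟩ := hx
  obtain ⟨d, hd⟩ := (germOf_eq_germOf_iff.1 hL').exists_eq_vadd ⟨k, L'.2.1⟩ ⟨k, L.2.1⟩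
  exact ⟨M, rfl, a + d + c, by rw [hML, hd, hL'c, vadd_vadd, vadd_vadd]⟩

theorem image_eq_vadd_of_forall_mem {f : (Fin N → ℤ) → (Fin N → ℤ)} {L : Set (Fin N → ℤ)}
    {a : Fin N → ℤ} (h : ∀ z ∈ L, f z = a + z) : f '' L = a +ᵥ L := by
  rw [← Set.image_vadd]
  exact Set.image_congr h

variable {f : (Fin N → ℤ) → (Fin N → ℤ)} {x : Germ S k} {y : Germ S' k}

theorem IsGermImage.germTranslates (h : IsGermImage f x y) : GermTranslates x y :=
  let ⟨L, M, a, hL, hM, hML, _⟩ := h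
  ⟨L, M, a, hL, hM, hML⟩

theorem IsGermImage.germMapsTo (h : IsGermImage f x y) : GermMapsTo f S S' ⟨k, x⟩ ⟨k, y⟩ := by
  obtain ⟨L, M, a, hL, hM, hML, hf⟩ := h
  exact ⟨rfl, L, L.1, M, hL, L.2.1, subset_rfl, commensurable_of_subset L.2.1 L.2.1 subset_rfl,
    hML.trans (image_eq_vadd_of_forall_mem hf).symm, hM⟩

theorem IsGermImage.unique {y' : Germ S' k} (h : IsGermImage f x y) (h' : IsGermImage f x y') :
    y = y' := by
  obtain ⟨L, M, a, hL, rfl, hML, hf⟩ := h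
  obtain ⟨L', M', a', hL', rfl, hML', hf'⟩ := h'
  have hLL' := germOf_eq_germOf_iff.1 (hL.trans hL'.symm)
  obtain ⟨z, hz, hz'⟩ := hLL'.1
  obtain rfl : a = a' := add_right_cancel ((hf z hz).symm.trans (hf' z hz'))
  rw [germOf_eq_germOf_iff, hML, hML']
  exact hLL'.vadd ⟨k, L.2.1⟩ ⟨k, L'.2.1⟩ a

theorem IsGermImage.of_leftInvOn {g : (Fin N → ℤ) → (Fin N → ℤ)} (h : IsGermImage f x y)
    (hg : Set.LeftInvOn g f S) : IsGermImage g y x := by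
  obtain ⟨L, M, a, hL, hM, hML, hf⟩ := h
  refine ⟨M, L, -a, hM, hL, by rw [hML, neg_vadd_vadd], ?_⟩
  rw [hML]
  rintro _ ⟨z, hz, rfl⟩
  change g (a + z) = -a + (a + z)
  rw [← hf z hz, hg (L.2.2 hz), hf z hz, neg_add_cancel_left]

theorem exists_isGermImage (hf : IsPetMapOn S f) (hmaps : Set.MapsTo f S S') (x : Germ S k) :
    ∃ y : Germ S' k, IsGermImage f x y := by
  obtain ⟨𝓛, hfin, horth, hS, -, htr⟩ := hf
  obtain ⟨R, rfl⟩ := Quot.exists_rep x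
  obtain ⟨P, hP, L, hL, hLR, hLP, hRL⟩ :=
    R.2.1.exists_commensurable_subset_of_subset_sUnion hfin horth (hS ▸ R.2.2)
  obtain ⟨a, ha⟩ := htr P hP
  have hfL : ∀ z ∈ L, f z = a + z := fun z hz => ha z (hLP hz)
  have hM : a +ᵥ L ⊆ S' := by
    rw [← image_eq_vadd_of_forall_mem hfL]
    exact (hmaps.mono_left (hLR.trans R.2.2)).image_subset
  exact ⟨germOf S' k ⟨a +ᵥ L, hL.vadd a, hM⟩, ⟨L, hL, hLR.trans R.2.2⟩, _, a,
    Quot.sound hRL.symm, rfl, rfl, hfL⟩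

end Germs

section PetIso

variable {N : ℕ} {S S' : Set (Fin N → ℤ)} {f : (Fin N → ℤ) → (Fin N → ℤ)}

theorem IsPetIso.mapsTo (hf : IsPetIso S S' f) : Set.MapsTo f S S' :=
  hf.2.2 ▸ Set.mapsTo_image f S

theorem IsPetIso.symm (hf : IsPetIso S S' f) : IsPetIso S' S (Function.invFunOn f S) := by
  obtain ⟨⟨𝓛, hfin, horth, rfl, hdisj, htr⟩, hinj, rfl⟩ := hf
  have hleft := hinj.leftInvOn_invFunOn
  refine ⟨⟨(f '' ·) '' 𝓛, hfin.image _, ?_, Set.image_sUnion, ?_, ?_⟩,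
    Set.LeftInvOn.injOn (Set.surjOn_image f _).rightInvOn_invFunOn, hleft.image_image⟩
  · rintro _ ⟨P, hP, rfl⟩
    obtain ⟨a, ha⟩ := htr P hP
    obtain ⟨m, hm⟩ := horth P hP
    show IsOrthant (f '' P)
    exact ⟨m, image_eq_vadd_of_forall_mem ha ▸ hm.vadd a⟩
  · rintro _ ⟨P, hP, rfl⟩ _ ⟨Q, hQ, rfl⟩ hne
    exact (hdisj hP hQ fun h => hne (h ▸ rfl)).image hinj
      (Set.subset_sUnion_of_mem hP) (Set.subset_sUnion_of_mem hQ)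
  · rintro _ ⟨P, hP, rfl⟩
    obtain ⟨a, ha⟩ := htr P hP
    refine ⟨-a, ?_⟩
    rintro _ ⟨z, hz, rfl⟩
    rw [hleft (Set.subset_sUnion_of_mem hP hz), ha z hz, neg_add_cancel_left]

theorem IsPetIso.exists_germEquiv (hf : IsPetIso S S' f) (k : ℕ) :
    ∃ e : Germ S k ≃ Germ S' k, ∀ x, IsGermImage f x (e x) := by
  have hg := hf.symm
  have hleft : Set.LeftInvOn (Function.invFunOn f S) f S := hf.2.1.leftInvOn_invFunOn
  have hright : Set.LeftInvOn f (Function.invFunOn f S) S' :=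
    hf.2.2 ▸ (Set.surjOn_image f S).rightInvOn_invFunOn
  choose F hF using exists_isGermImage (k := k) hf.1 hf.mapsTo
  refine ⟨Equiv.ofBijective F ⟨fun x x' h => ?_, fun y => ?_⟩, hF⟩
  · exact ((hF x).of_leftInvOn hleft).unique (h ▸ (hF x').of_leftInvOn hleft)
  · obtain ⟨x, hx⟩ := exists_isGermImage hg.1 hg.mapsTo y
    exact ⟨x, (hF x).unique (hx.of_leftInvOn hright)⟩

theorem indicatorImage_subset_of_isPetMapOn (hf : IsPetMapOn S f) (hmaps : Set.MapsTo f S S') :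
    indicatorImage S ⊆ indicatorImage S' := by
  refine Set.sUnion_subset fun L0 ⟨hL0, a, haS⟩ => Set.subset_sUnion_of_mem ⟨hL0, ?_⟩
  obtain ⟨k, hk⟩ := hL0.isOrthant_vadd a
  obtain ⟨y, hy⟩ := exists_isGermImage hf hmaps (germOf S k ⟨_, hk, haS⟩)
  obtain ⟨M, -, c, hM⟩ := hy.germTranslates.hasIndicator ⟨_, rfl, a, rfl⟩
  exact ⟨c, hM ▸ M.2.2⟩

end PetIso

section MaxGerm

variable {N : ℕ} {S S' : Set (Fin N → ℤ)} {k : ℕ}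

theorem IsMaxGerm.exists_mem_germOf_eq {𝓚 : Set (Set (Fin N → ℤ))} (hfin : 𝓚.Finite)
    (horth : ∀ K ∈ 𝓚, IsOrthant K) (hS : S = ⋃₀ 𝓚) {x : Germ S k}
    (hx : IsMaxGerm S ⟨k, x⟩) : ∃ K ∈ 𝓚, ∃ hK : K ∈ germSet S k, germOf S k ⟨K, hK⟩ = x := by
  obtain ⟨R, rfl⟩ := Quot.exists_rep x
  obtain ⟨K, hK, L, hL, hLR, hLK, hRL⟩ :=
    R.2.1.exists_commensurable_subset_of_subset_sUnion hfin horth (hS ▸ R.2.2)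
  obtain ⟨m, hm⟩ := horth K hK
  have hKS : K ⊆ S := hS ▸ Set.subset_sUnion_of_mem hK
  have hLx : germOf S k ⟨L, hL, hLR.trans R.2.2⟩ = germOf S k R :=
    germOf_eq_germOf_iff.2 hRL.symm
  obtain ⟨A, B, -, -, hAB⟩ := hx ⟨m, germOf S m ⟨K, hm, hKS⟩⟩ ⟨_, ⟨K, hm, hKS⟩, hLx, rfl, hLK⟩
  obtain rfl : m = k := le_antisymm (A.2.1.le_of_subset B.2.1 hAB) (hL.le_of_subset hm hLK)
  exact ⟨K, hK, ⟨hm, hKS⟩,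
    (germOf_eq_germOf_iff.2 (commensurable_of_subset hL hm hLK).symm).trans hLx⟩

theorem finite_setOf_isMaxGerm (hS : IsOrthohedral S) :
    {p : Σ k, Germ S k | IsMaxGerm S p}.Finite := by
  obtain ⟨𝓚, hfin, horth, hS⟩ := hS
  refine (hfin.biUnion (t := fun K =>
      {p : Σ k, Germ S k | ∃ hK : K ∈ germSet S p.1, germOf S p.1 ⟨K, hK⟩ = p.2})
    fun K _ => Set.Subsingleton.finite ?_).subset ?_
  · rintro ⟨k, x⟩ ⟨hK, hx⟩ ⟨k', x'⟩ ⟨hK', hx'⟩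
    obtain rfl : k = k' := hK.1.orthRank_eq.symm.trans hK'.1.orthRank_eq
    exact congrArg (Sigma.mk k) (hx.symm.trans hx')
  · rintro ⟨k, x⟩ hx
    obtain ⟨K, hK, hKk, hKx⟩ := hx.exists_mem_germOf_eq hfin horth hS
    exact Set.mem_biUnion hK ⟨hKk, hKx⟩

theorem subset_indicatorImage {L0 : Set (Fin N → ℤ)} (hL0 : IsBasedOrthant L0) {a : Fin N → ℤ}
    (h : a +ᵥ L0 ⊆ S) : L0 ⊆ indicatorImage S :=
  Set.subset_sUnion_of_mem ⟨hL0, a, h⟩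

theorem IsBasedOrthant.subset_of_vadd_subset_vadd {L0 L1 : Set (Fin N → ℤ)}
    (h0 : IsBasedOrthant L0) (h1 : IsBasedOrthant L1) {a b : Fin N → ℤ}
    (h : a +ᵥ L0 ⊆ b +ᵥ L1) : L0 ⊆ L1 := by
  obtain ⟨ε, Y, rfl⟩ := h0.exists_eq_coordOrthant
  obtain ⟨δ, Z, rfl⟩ := h1.exists_eq_coordOrthant
  rw [vadd_coordOrthant, vadd_coordOrthant, coordOrthant_subset_coordOrthant_iff] at h
  exact coordOrthant_subset_coordOrthant_iff.2 ⟨apex_mem_coordOrthant 0 δ Z, h.2⟩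

theorem isMaxGerm_of_maximal {x : Germ S k} {L0 : Set (Fin N → ℤ)} (hx : HasIndicator x L0)
    (hmax : Maximal (fun L => IsBasedOrthant L ∧ L ⊆ indicatorImage S) L0) :
    IsMaxGerm S ⟨k, x⟩ := by
  rintro ⟨m, y⟩ ⟨A, B, hA, hB, hAB⟩
  obtain ⟨L, hL, c, hLc⟩ := hx
  obtain ⟨d, hd⟩ :=
    (germOf_eq_germOf_iff.1 (hL.trans hA.symm)).exists_eq_vadd ⟨k, L.2.1⟩ ⟨k, A.2.1⟩
  obtain ⟨b, L1, hL1, hBL1⟩ := B.2.1.exists_eq_vadd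
  have hA' : A.1 = (d + c) +ᵥ L0 := by rw [hd, hLc, vadd_vadd]
  have h01 : L0 ⊆ L1 :=
    hmax.1.1.subset_of_vadd_subset_vadd hL1 (by rw [← hA', ← hBL1]; exact hAB)
  have h10 : L1 ⊆ L0 := hmax.2 ⟨hL1, subset_indicatorImage hL1 (hBL1 ▸ B.2.2)⟩ h01
  have hBA : B.1 = (b - (d + c)) +ᵥ A.1 := by
    rw [hBL1, hA', vadd_vadd, sub_add_cancel, h10.antisymm h01]
  obtain rfl : m = k := B.2.1.orthRank_eq.symm.trans (hBA ▸ A.2.1.vadd _).orthRank_eq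
  exact ⟨B, B, hB, (germOf_eq_germOf_iff.2 (commensurable_of_subset A.2.1 B.2.1 hAB).symm).trans hA,
    subset_rfl⟩

theorem IsMaxGerm.maximal (hS : IsOrthohedral S) (hq : QuasiNormal S) {x : Germ S k}
    (hx : IsMaxGerm S ⟨k, x⟩) {L0 : Set (Fin N → ℤ)} (hL0 : IsBasedOrthant L0)
    (hxL0 : HasIndicator x L0) :
    Maximal (fun L => IsBasedOrthant L ∧ L ⊆ indicatorImage S) L0 := by
  have hfin : Finite {p : Σ k, Germ S k // IsMaxGerm S p ∧ HasIndicator p.2 L0} :=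
    ((finite_setOf_isMaxGerm hS).subset fun _ hp => hp.1).to_subtype
  obtain ⟨-, hsub, hmax⟩ := (hq L0).2 ⟨hL0, Nat.card_pos_iff.2 ⟨⟨⟨k, x⟩, hx, hxL0⟩, hfin⟩⟩
  exact ⟨⟨hL0, hsub⟩, fun L1 hL1 h01 => hmax L1 hL1.1 hL1.2 h01⟩

theorem GermTranslates.isMaxGerm {x : Germ S k} {y : Germ S' k} (h : GermTranslates x y)
    (hS : IsOrthohedral S) (hq : QuasiNormal S) (hind : indicatorImage S = indicatorImage S')
    (hx : IsMaxGerm S ⟨k, x⟩) : IsMaxGerm S' ⟨k, y⟩ := by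
  obtain ⟨L0, hL0, hxL0⟩ := exists_hasIndicator x
  exact isMaxGerm_of_maximal (h.hasIndicator hxL0) (hind ▸ hx.maximal hS hq hL0 hxL0)

end MaxGerm

/-- A pet-isomorphism between quasi-normal orthohedral sets maps maximal
germs bijectively to maximal germs and preserves the height functions. -/
theorem stmt7 {N : ℕ} (S S' : Set (Fin N → ℤ)) (hS : IsOrthohedral S)
    (hS' : IsOrthohedral S') (hq : QuasiNormal S) (hq' : QuasiNormal S')
    (f : (Fin N → ℤ) → (Fin N → ℤ)) (hf : IsPetIso S S' f) :
    (∃ e : {p : Σ k, Germ S k // IsMaxGerm S p} ≃ {q : Σ k, Germ S' k // IsMaxGerm S' q},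
      ∀ p, GermMapsTo f S S' p.1 (e p).1) ∧
    (∀ L0 : Set (Fin N → ℤ), hFun S L0 = hFun S' L0) := by
  have hg := hf.symm
  have hind : indicatorImage S = indicatorImage S' :=
    (indicatorImage_subset_of_isPetMapOn hf.1 hf.mapsTo).antisymm
      (indicatorImage_subset_of_isPetMapOn hg.1 hg.mapsTo)
  choose e he using hf.exists_germEquiv
  set E := Equiv.sigmaCongrRight e
  have hmax : ∀ p, IsMaxGerm S p ↔ IsMaxGerm S' (E p) := fun ⟨k, x⟩ =>
    ⟨(he k x).germTranslates.isMaxGerm hS hq hind,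
      (he k x).germTranslates.symm.isMaxGerm hS' hq' hind.symm⟩
  have hindicator : ∀ L0 (p : Σ k, Germ S k), HasIndicator p.2 L0 ↔ HasIndicator (E p).2 L0 :=
    fun L0 ⟨k, x⟩ =>
      ⟨(he k x).germTranslates.hasIndicator, (he k x).germTranslates.symm.hasIndicator⟩
  exact ⟨⟨E.subtypeEquiv hmax, fun ⟨⟨k, x⟩, _⟩ => (he k x).germMapsTo⟩, fun L0 =>
    Nat.card_congr (E.subtypeEquiv fun p => and_congr (hmax p) (hindicator L0 p))⟩

end PeiPaper
end
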